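/- arXiv:1704.02367 — 6 statements merged into one kernel-verified Lean document; each statement's English description precedes it below -/
import Mathlib

section
/- For any finite set L, any two multipartitions M and N of L, and any real values λ_i for i ∈ L, there exist integers ℓ_i with ℓ_i ∈ {⌊λ_i⌋, ⌈λ_i⌉} for every i ∈ L, such that for every A ∈ M and every A ∈ N it holds that Σ_{i∈A} ℓ_i ∈ {⌊Σ_{i∈A} λ_i⌋, ⌈Σ_{i∈A} λ_i⌉}. -/
/-!
Iterative rounding. Call `d ≠ 0` a rounding direction at `λ` if `∑_{i ∈ A} d i = 0` for
every member `A` of `M ∪ N` whose `λ`-sum is already an integer. Moving `λ` along `d` until one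
more sum becomes an integer keeps every sum between its original floor and ceiling, and strictly
decreases the number of non-integral sums; once all `λ i` are integers, `ℓ = λ` works.

Rounding directions exist while the set `F` of fractional coordinates is nonempty. In a laminar
family, each integral member `A` is the disjoint union of the own parts of the integral members
`B ⊆ A`, the own part of `B` being the elements whose smallest integral member is `B`; by
induction these own parts have integral sums. So the constraints of one family reduce to pairwise
disjoint blocks of fractional elements, each of size at least two. Two families then impose at
most `|F|` constraints on `F`, and exactly `|F|` only when both partition `F`, in which case the
constraints are dependent.
-/

open Finset

/-- A multipartition of a finite set (type) `L`: a family of subsets containing the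
whole set and all singletons, in which any two members are disjoint or nested. -/
def IsMultipartition {L : Type*} [Fintype L] [DecidableEq L] (M : Finset (Finset L)) : Prop :=
  (Finset.univ ∈ M) ∧ (∀ i : L, {i} ∈ M) ∧
    (∀ A ∈ M, ∀ B ∈ M, Disjoint A B ∨ A ⊆ B ∨ B ⊆ A)

theorem Int.eq_floor_or_eq_ceil_of_le_of_le {R : Type*} [Ring R] [LinearOrder R]
    [IsStrictOrderedRing R] [FloorRing R] {w : R} {z : ℤ} (h₁ : ⌊w⌋ ≤ z) (h₂ : z ≤ ⌈w⌉) :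
    z = ⌊w⌋ ∨ z = ⌈w⌉ := by
  have := Int.ceil_le_floor_add_one w
  omega

theorem AddSubgroup.mem_of_sum_mem_of_forall_ne {ι M : Type*} [AddCommGroup M] [DecidableEq ι]
    (G : AddSubgroup M) {s : Finset ι} {f : ι → M} {i : ι} (hi : i ∈ s)
    (hs : ∑ j ∈ s, f j ∈ G) (hrest : ∀ j ∈ s, j ≠ i → f j ∈ G) : f i ∈ G := by
  rw [← add_sum_erase s f hi] at hs
  simpa using
    G.sub_mem hs (G.sum_mem fun j hj => hrest j (mem_of_mem_erase hj) (ne_of_mem_erase hj))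

theorem exists_hitting_time (a b : ℝ) :
    ∃ s, 0 ≤ s ∧ (b ≠ 0 → a + s * b ∈ Set.range Int.cast) ∧
      ∀ t, 0 ≤ t → t ≤ s → (⌊a⌋ : ℝ) ≤ a + t * b ∧ a + t * b ≤ ⌈a⌉ := by
  have hfl := Int.floor_le a
  have hcl := Int.le_ceil a
  rcases lt_trichotomy b 0 with hb | rfl | hb
  · refine ⟨(⌊a⌋ - a) / b, div_nonneg_of_nonpos (by linarith) hb.le,
      fun _ => ⟨⌊a⌋, by field_simp; ring⟩, fun t ht hts => ⟨?_, ?_⟩⟩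
    · have : (⌊a⌋ - a) / b * b ≤ t * b := mul_le_mul_of_nonpos_right hts hb.le
      rw [div_mul_cancel₀ _ hb.ne] at this
      linarith
    · nlinarith
  · exact ⟨0, le_rfl, fun h => absurd rfl h, fun t _ _ => by simp [hfl, hcl]⟩
  · refine ⟨(⌈a⌉ - a) / b, div_nonneg (by linarith) hb.le,
      fun _ => ⟨⌈a⌉, by field_simp; ring⟩, fun t ht hts => ⟨?_, ?_⟩⟩
    · nlinarith
    · have : t * b ≤ (⌈a⌉ - a) / b * b := mul_le_mul_of_nonneg_right hts hb.le
      rw [div_mul_cancel₀ _ hb.ne'] at this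
      linarith

theorem exists_add_mul_mem_range_intCast {ι : Type*} {S : Finset ι} (hS : S.Nonempty)
    (a b : ι → ℝ) (hb : ∀ A ∈ S, b A ≠ 0) :
    ∃ t : ℝ, (∀ A ∈ S, (⌊a A⌋ : ℝ) ≤ a A + t * b A ∧ a A + t * b A ≤ ⌈a A⌉) ∧
      ∃ A ∈ S, a A + t * b A ∈ Set.range Int.cast := by
  choose s hs₀ hsint hsbound using fun A => exists_hitting_time (a A) (b A)
  obtain ⟨A₀, hA₀, hmin⟩ := S.exists_min_image s hS
  exact ⟨s A₀, fun A hA => hsbound A _ (hs₀ A₀) (hmin A hA), A₀, hA₀, hsint A₀ (hb A₀ hA₀)⟩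

def HasRoundingDirections {L : Type*} (𝓕 : Finset (Finset L)) : Prop :=
  ∀ lam : L → ℝ, (∃ i, lam i ∉ Set.range Int.cast) →
    ∃ d : L → ℝ, d ≠ 0 ∧ ∀ A ∈ 𝓕, ∑ i ∈ A, lam i ∈ Set.range Int.cast → ∑ i ∈ A, d i = 0

theorem HasRoundingDirections.exists_rounding {L : Type*} [DecidableEq L] {𝓕 : Finset (Finset L)}
    (h𝓕 : HasRoundingDirections 𝓕) (hsing : ∀ i, {i} ∈ 𝓕) (lam : L → ℝ) :
    ∃ ℓ : L → ℤ, ∀ A ∈ 𝓕,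
      ⌊∑ i ∈ A, lam i⌋ ≤ ∑ i ∈ A, ℓ i ∧ ∑ i ∈ A, ℓ i ≤ ⌈∑ i ∈ A, lam i⌉ := by
  classical
  induction hn : #{A ∈ 𝓕 | ∑ i ∈ A, lam i ∉ Set.range Int.cast} using Nat.strong_induction_on
    generalizing lam with
  | _ n ih =>
  by_cases hfrac : ∃ i, lam i ∉ Set.range Int.cast
  swap
  · push Not at hfrac
    choose ℓ hℓ using hfrac
    refine ⟨ℓ, fun A _ => ?_⟩
    have hA : ((∑ i ∈ A, ℓ i : ℤ) : ℝ) = ∑ i ∈ A, lam i := by push_cast; simp only [hℓ]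
    rw [← hA, Int.floor_intCast, Int.ceil_intCast]
    exact ⟨le_rfl, le_rfl⟩
  obtain ⟨d, hd, hdint⟩ := h𝓕 lam hfrac
  obtain ⟨i₀, hi₀⟩ := Function.ne_iff.1 hd
  obtain ⟨t, hbound, A₀, hA₀, hA₀int⟩ := exists_add_mul_mem_range_intCast
    (S := {A ∈ 𝓕 | ∑ i ∈ A, d i ≠ 0}) ⟨{i₀}, by simpa [hsing] using hi₀⟩
    (fun A => ∑ i ∈ A, lam i) (fun A => ∑ i ∈ A, d i) (fun A hA => (mem_filter.1 hA).2)
  set lam' : L → ℝ := fun i => lam i + t * d i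
  have hsum : ∀ A, ∑ i ∈ A, lam' i = ∑ i ∈ A, lam i + t * ∑ i ∈ A, d i := fun A => by
    simp [lam', sum_add_distrib, mul_sum]
  have hkeep : ∀ A ∈ 𝓕, ∑ i ∈ A, lam i ∈ Set.range Int.cast → ∑ i ∈ A, lam' i = ∑ i ∈ A, lam i :=
    fun A hA hint => by simp [hsum, hdint A hA hint]
  have hbound' : ∀ A ∈ 𝓕, (⌊∑ i ∈ A, lam i⌋ : ℝ) ≤ ∑ i ∈ A, lam' i ∧
      ∑ i ∈ A, lam' i ≤ ⌈∑ i ∈ A, lam i⌉ := by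
    intro A hA
    by_cases hdA : ∑ i ∈ A, d i = 0
    · simpa [hsum, hdA] using ⟨Int.floor_le _, Int.le_ceil _⟩
    · simpa [hsum] using hbound A (mem_filter.2 ⟨hA, hdA⟩)
  have hfewer : #{A ∈ 𝓕 | ∑ i ∈ A, lam' i ∉ Set.range Int.cast} < n := by
    rw [← hn]
    refine card_lt_card (ssubset_iff_of_subset ?_ |>.2 ⟨A₀, ?_, ?_⟩)
    · intro A hA
      simp only [mem_filter] at hA ⊢
      exact ⟨hA.1, fun hint => hA.2 (hkeep A hA.1 hint ▸ hint)⟩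
    · obtain ⟨hA₀𝓕, hdA₀⟩ := mem_filter.1 hA₀
      exact mem_filter.2 ⟨hA₀𝓕, fun hint => hdA₀ (hdint A₀ hA₀𝓕 hint)⟩
    · simp only [mem_filter, hsum, not_and, not_not]
      exact fun _ => hA₀int
  obtain ⟨ℓ, hℓ⟩ := ih _ hfewer lam' rfl
  exact ⟨ℓ, fun A hA => ⟨(Int.le_floor.2 (hbound' A hA).1).trans (hℓ A hA).1,
    (hℓ A hA).2.trans (Int.ceil_le.2 (hbound' A hA).2)⟩⟩

def IsLaminar {L : Type*} (P : Finset (Finset L)) : Prop :=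
  ∀ A ∈ P, ∀ B ∈ P, Disjoint A B ∨ A ⊆ B ∨ B ⊆ A

def ownPart {L : Type*} [DecidableEq L] (Q : Finset (Finset L)) (A : Finset L) : Finset L :=
  {i ∈ A | ∀ B ∈ Q, i ∈ B → A ⊆ B}

section Laminar

variable {L : Type*} {P Q : Finset (Finset L)} {A B : Finset L}

theorem IsLaminar.mono (hP : IsLaminar P) (hQP : Q ⊆ P) : IsLaminar Q :=
  fun A hA B hB => hP A (hQP hA) B (hQP hB)

theorem IsLaminar.subset_of_card_le (hQ : IsLaminar Q) (hA : A ∈ Q) (hB : B ∈ Q) {i : L}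
    (hiA : i ∈ A) (hiB : i ∈ B) (hcard : #A ≤ #B) : A ⊆ B := by
  rcases hQ A hA B hB with hdisj | hAB | hBA
  · exact absurd hiB (disjoint_left.1 hdisj hiA)
  · exact hAB
  · exact (eq_of_subset_of_card_le hBA hcard).ge

variable [DecidableEq L]

theorem ownPart_subset : ownPart Q A ⊆ A := filter_subset _ _

theorem pairwiseDisjoint_ownPart : (Q : Set (Finset L)).PairwiseDisjoint (ownPart Q) := by
  intro A hA B hB hAB
  refine disjoint_left.2 fun i hiA hiB => hAB (subset_antisymm ?_ ?_)
  · exact (mem_filter.1 hiA).2 B hB (ownPart_subset hiB)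
  · exact (mem_filter.1 hiB).2 A hA (ownPart_subset hiA)

theorem IsLaminar.exists_mem_ownPart (hQ : IsLaminar Q) (hA : A ∈ Q) {i : L} (hi : i ∈ A) :
    ∃ B ∈ Q, B ⊆ A ∧ i ∈ ownPart Q B := by
  obtain ⟨B, hB, hmin⟩ := exists_min_image {C ∈ Q | i ∈ C} card ⟨A, mem_filter.2 ⟨hA, hi⟩⟩
  obtain ⟨hBQ, hiB⟩ := mem_filter.1 hB
  have hBsub : ∀ C ∈ Q, i ∈ C → B ⊆ C := fun C hC hiC =>
    hQ.subset_of_card_le hBQ hC hiB hiC (hmin C (mem_filter.2 ⟨hC, hiC⟩))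
  exact ⟨B, hBQ, hBsub A hA hi, mem_filter.2 ⟨hiB, hBsub⟩⟩

theorem IsLaminar.sum_eq_sum_ownPart {M : Type*} [AddCommMonoid M] (hQ : IsLaminar Q) (hA : A ∈ Q)
    (f : L → M) : ∑ i ∈ A, f i = ∑ B ∈ Q with B ⊆ A, ∑ i ∈ ownPart Q B, f i := by
  have hcover : ({B ∈ Q | B ⊆ A} : Finset (Finset L)).biUnion (ownPart Q) = A := by
    refine subset_antisymm (biUnion_subset.2 fun B hB => ?_) fun i hi => ?_
    · exact ownPart_subset.trans (mem_filter.1 hB).2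
    · obtain ⟨B, hBQ, hBA, hiB⟩ := hQ.exists_mem_ownPart hA hi
      exact mem_biUnion.2 ⟨B, mem_filter.2 ⟨hBQ, hBA⟩, hiB⟩
  rw [← sum_biUnion (pairwiseDisjoint_ownPart.subset (coe_subset.2 (filter_subset _ _))), hcover]

theorem IsLaminar.sum_ownPart_mem {M : Type*} [AddCommGroup M] (G : AddSubgroup M) {f : L → M}
    (hQ : IsLaminar Q) (hG : ∀ B ∈ Q, ∑ i ∈ B, f i ∈ G) (hA : A ∈ Q) :
    ∑ i ∈ ownPart Q A, f i ∈ G := by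
  induction hn : #A using Nat.strong_induction_on generalizing A with
  | _ n ih =>
  have hsplit := hQ.sum_eq_sum_ownPart hA f
  have hAA : A ∈ ({B ∈ Q | B ⊆ A} : Finset (Finset L)) := mem_filter.2 ⟨hA, subset_rfl⟩
  rw [← add_sum_erase _ _ hAA] at hsplit
  rw [eq_sub_of_add_eq hsplit.symm]
  refine G.sub_mem (hG A hA) (G.sum_mem fun B hB => ?_)
  obtain ⟨hBA, hB⟩ := mem_erase.1 hB
  obtain ⟨hBQ, hBsub⟩ := mem_filter.1 hB
  exact ih _ (hn ▸ card_lt_card (ssubset_of_subset_of_ne hBsub hBA)) hBQ rfl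

theorem IsLaminar.exists_fractional_blocks (hP : IsLaminar P) (lam : L → ℝ) :
    ∃ 𝓑 : Finset (Finset L), (𝓑 : Set (Finset L)).PairwiseDisjoint id ∧
      (∀ τ ∈ 𝓑, 2 ≤ #τ ∧ ∀ i ∈ τ, lam i ∉ Set.range Int.cast) ∧
      ∀ d : L → ℝ, (∀ i, lam i ∈ Set.range Int.cast → d i = 0) → (∀ τ ∈ 𝓑, ∑ i ∈ τ, d i = 0) →
        ∀ A ∈ P, ∑ i ∈ A, lam i ∈ Set.range Int.cast → ∑ i ∈ A, d i = 0 := by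
  classical
  set Q := {A ∈ P | ∑ i ∈ A, lam i ∈ Set.range Int.cast}
  have hQ : IsLaminar Q := hP.mono (filter_subset _ _)
  set frac : Finset L → Finset L := fun A => {i ∈ ownPart Q A | lam i ∉ Set.range Int.cast}
  refine ⟨{τ ∈ Q.image frac | τ.Nonempty}, ?_, fun τ hτ => ?_, fun d hd₀ hd A hA hint => ?_⟩
  · intro τ₁ h₁ τ₂ h₂ hne
    obtain ⟨A₁, hA₁, rfl⟩ := mem_image.1 (mem_filter.1 h₁).1
    obtain ⟨A₂, hA₂, rfl⟩ := mem_image.1 (mem_filter.1 h₂).1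
    have hA : A₁ ≠ A₂ := fun h => hne (h ▸ rfl)
    exact (pairwiseDisjoint_ownPart hA₁ hA₂ hA).mono (filter_subset _ _) (filter_subset _ _)
  · obtain ⟨hτim, hτne⟩ := mem_filter.1 hτ
    obtain ⟨A, hA, rfl⟩ := mem_image.1 hτim
    refine ⟨?_, fun i hi => (mem_filter.1 hi).2⟩
    -- a singleton block `{i}` would make `lam i` integral, the own part having integral sum
    by_contra hlt
    obtain ⟨i, hi⟩ := card_eq_one.1 (show #(frac A) = 1 by have := hτne.card_pos; omega)
    obtain ⟨hiA, hifrac⟩ := mem_filter.1 (hi ▸ mem_singleton_self i : i ∈ frac A)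
    refine hifrac (AddSubgroup.mem_of_sum_mem_of_forall_ne (Int.castAddHom ℝ).range
      hiA (hQ.sum_ownPart_mem _ (fun B hB => (mem_filter.1 hB).2) hA)
      fun j hj hji => ?_)
    by_contra hjfrac
    exact hji (mem_singleton.1 (hi ▸ mem_filter.2 ⟨hj, hjfrac⟩))
  · have hAQ : A ∈ Q := mem_filter.2 ⟨hA, hint⟩
    rw [hQ.sum_eq_sum_ownPart hAQ d]
    refine sum_eq_zero fun B hB => ?_
    rw [← sum_filter_of_ne fun i _ hdi => mt (hd₀ i) hdi]
    rcases (frac B).eq_empty_or_nonempty with hempty | hne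
    · simp only [frac] at hempty
      rw [hempty, sum_empty]
    · exact hd _ (mem_filter.2 ⟨mem_image_of_mem _ (mem_filter.1 hB).1, hne⟩)

end Laminar

section Blocks

variable {α : Type*} [DecidableEq α]

theorem two_mul_card_le_card_biUnion {𝓑 : Finset (Finset α)}
    (hdisj : (𝓑 : Set (Finset α)).PairwiseDisjoint id) (hcard : ∀ τ ∈ 𝓑, 2 ≤ #τ) :
    2 * #𝓑 ≤ #(𝓑.biUnion id) := by
  rw [card_biUnion hdisj, mul_comm, ← smul_eq_mul]
  exact card_nsmul_le_sum _ _ _ hcard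

theorem exists_ne_zero_sum_eq_zero_of_card_lt {K : Type*} [Field K] [Fintype α] {F : Finset α}
    {S : Finset (Finset α)} (h : #S < #F) :
    ∃ d : α → K, d ≠ 0 ∧ (∀ j ∉ F, d j = 0) ∧ ∀ τ ∈ S, ∑ i ∈ τ, d i = 0 := by
  let Φ : (α → K) →ₗ[K] (↥Fᶜ → K) × (↥S → K) :=
    (LinearMap.pi fun j : ↥Fᶜ => LinearMap.proj (j : α)).prod
      (LinearMap.pi fun τ : ↥S => ∑ i ∈ (τ : Finset α), LinearMap.proj i)
  have hker : LinearMap.ker Φ ≠ ⊥ := LinearMap.ker_ne_bot_of_finrank_lt (by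
    simp only [Module.finrank_prod, Module.finrank_fintype_fun_eq_card, Fintype.card_coe,
      card_compl]
    have := card_le_univ F
    omega)
  obtain ⟨d, hd, hd0⟩ := (Submodule.ne_bot_iff _).1 hker
  have hΦd := LinearMap.mem_ker.1 hd
  refine ⟨d, hd0, fun j hj => ?_, fun τ hτ => ?_⟩
  · simpa [Φ] using congrFun (congrArg Prod.fst hΦd) ⟨j, mem_compl.2 hj⟩
  · simpa [Φ] using congrFun (congrArg Prod.snd hΦd) ⟨τ, hτ⟩

variable {F : Finset α} {𝓑 : Finset (Finset α)}

theorem two_mul_card_le_of_blocks (hdisj : (𝓑 : Set (Finset α)).PairwiseDisjoint id)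
    (h𝓑 : ∀ τ ∈ 𝓑, τ ⊆ F ∧ 2 ≤ #τ) : 2 * #𝓑 ≤ #F :=
  (two_mul_card_le_card_biUnion hdisj fun τ hτ => (h𝓑 τ hτ).2).trans
    (card_le_card (biUnion_subset.2 fun τ hτ => (h𝓑 τ hτ).1))

theorem biUnion_eq_of_card_le_two_mul (hdisj : (𝓑 : Set (Finset α)).PairwiseDisjoint id)
    (h𝓑 : ∀ τ ∈ 𝓑, τ ⊆ F ∧ 2 ≤ #τ) (hF : #F ≤ 2 * #𝓑) : 𝓑.biUnion id = F :=
  eq_of_subset_of_card_le (biUnion_subset.2 fun τ hτ => (h𝓑 τ hτ).1)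
    (hF.trans (two_mul_card_le_card_biUnion hdisj fun τ hτ => (h𝓑 τ hτ).2))

theorem exists_ne_zero_sum_eq_zero_of_blocks {K : Type*} [Field K] [Fintype α] (hF : F.Nonempty)
    {𝓑₁ 𝓑₂ : Finset (Finset α)} (hdisj₁ : (𝓑₁ : Set (Finset α)).PairwiseDisjoint id)
    (hdisj₂ : (𝓑₂ : Set (Finset α)).PairwiseDisjoint id) (h₁ : ∀ τ ∈ 𝓑₁, τ ⊆ F ∧ 2 ≤ #τ)
    (h₂ : ∀ τ ∈ 𝓑₂, τ ⊆ F ∧ 2 ≤ #τ) :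
    ∃ d : α → K, d ≠ 0 ∧ (∀ j ∉ F, d j = 0) ∧ ∀ τ ∈ 𝓑₁ ∪ 𝓑₂, ∑ i ∈ τ, d i = 0 := by
  have hle₁ := two_mul_card_le_of_blocks hdisj₁ h₁
  have hle₂ := two_mul_card_le_of_blocks hdisj₂ h₂
  by_cases hlt : #(𝓑₁ ∪ 𝓑₂) < #F
  · exact exists_ne_zero_sum_eq_zero_of_card_lt hlt
  -- Otherwise both families partition `F`, so the constraint of `τ₀ ∈ 𝓑₂ \ 𝓑₁` follows from
  -- the others: both families' constraints add up to `∑ i ∈ F, d i = 0`.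
  have hunion := card_union_add_card_inter 𝓑₁ 𝓑₂
  have hFpos := hF.card_pos
  have hcover₁ := biUnion_eq_of_card_le_two_mul hdisj₁ h₁ (by omega)
  have hcover₂ := biUnion_eq_of_card_le_two_mul hdisj₂ h₂ (by omega)
  obtain ⟨τ₀, hτ₀⟩ : 𝓑₂.Nonempty := card_pos.1 (by omega)
  have hτ₀₁ : τ₀ ∉ 𝓑₁ := fun h => by
    simpa [card_eq_zero.1 (show #(𝓑₁ ∩ 𝓑₂) = 0 by omega)] using mem_inter.2 ⟨h, hτ₀⟩
  obtain ⟨d, hd0, hdF, hd⟩ := exists_ne_zero_sum_eq_zero_of_card_lt (K := K)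
    (S := (𝓑₁ ∪ 𝓑₂).erase τ₀) (F := F)
    (by rw [card_erase_of_mem (mem_union_right _ hτ₀)]; omega)
  refine ⟨d, hd0, hdF, fun τ hτ => ?_⟩
  obtain rfl | hττ₀ := eq_or_ne τ τ₀
  · have hF₁ : ∑ i ∈ F, d i = 0 := by
      rw [← hcover₁, sum_biUnion hdisj₁]
      exact sum_eq_zero fun σ hσ =>
        hd σ (mem_erase.2 ⟨ne_of_mem_of_not_mem hσ hτ₀₁, mem_union_left _ hσ⟩)
    have hF₂ : ∑ i ∈ F, d i = ∑ i ∈ τ, d i := by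
      have hrest : ∑ σ ∈ 𝓑₂.erase τ, ∑ i ∈ id σ, d i = 0 := sum_eq_zero fun σ hσ =>
        hd σ (mem_erase.2 ⟨ne_of_mem_erase hσ, mem_union_right _ (mem_of_mem_erase hσ)⟩)
      rw [← hcover₂, sum_biUnion hdisj₂, ← add_sum_erase _ _ hτ₀, hrest, add_zero, id]
    rw [← hF₂, hF₁]
  · exact hd τ (mem_erase.2 ⟨hττ₀, hτ⟩)

end Blocks

theorem IsLaminar.hasRoundingDirections_union {L : Type*} [Fintype L] [DecidableEq L]
    {M N : Finset (Finset L)} (hM : IsLaminar M) (hN : IsLaminar N) :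
    HasRoundingDirections (M ∪ N) := by
  classical
  rintro lam ⟨i₀, hi₀⟩
  obtain ⟨𝓑₁, hdisj₁, h₁, hprop₁⟩ := hM.exists_fractional_blocks lam
  obtain ⟨𝓑₂, hdisj₂, h₂, hprop₂⟩ := hN.exists_fractional_blocks lam
  have hsubF : ∀ {𝓑 : Finset (Finset L)},
      (∀ τ ∈ 𝓑, 2 ≤ #τ ∧ ∀ i ∈ τ, lam i ∉ Set.range Int.cast) →
      ∀ τ ∈ 𝓑, τ ⊆ ({i | lam i ∉ Set.range Int.cast} : Finset L) ∧ 2 ≤ #τ :=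
    fun h τ hτ => ⟨fun i hi => mem_filter.2 ⟨mem_univ i, (h τ hτ).2 i hi⟩, (h τ hτ).1⟩
  obtain ⟨d, hd0, hdF, hd⟩ := exists_ne_zero_sum_eq_zero_of_blocks (K := ℝ)
    ⟨i₀, mem_filter.2 ⟨mem_univ _, hi₀⟩⟩ hdisj₁ hdisj₂ (hsubF h₁) (hsubF h₂)
  have hdint : ∀ i, lam i ∈ Set.range Int.cast → d i = 0 :=
    fun i hi => hdF i fun h => (mem_filter.1 h).2 hi
  refine ⟨d, hd0, fun A hA hint => ?_⟩
  rcases mem_union.1 hA with hA | hA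
  · exact hprop₁ d hdint (fun τ hτ => hd τ (mem_union_left _ hτ)) A hA hint
  · exact hprop₂ d hdint (fun τ hτ => hd τ (mem_union_right _ hτ)) A hA hint

/-- rounding feasibility: given two multipartitions `M`, `N` of `L` and reals
`λ i`, there are integers `ℓ i ∈ {⌊λ i⌋, ⌈λ i⌉}` whose sum over every member of `M` and of `N`
is the floor or ceiling of the corresponding real sum. -/
theorem rounding_feasibility {L : Type*} [Fintype L] [DecidableEq L]
    (M N : Finset (Finset L)) (hM : IsMultipartition M) (hN : IsMultipartition N)
    (lam : L → ℝ) :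
    ∃ ℓ : L → ℤ,
      (∀ i : L, ℓ i = ⌊lam i⌋ ∨ ℓ i = ⌈lam i⌉) ∧
      (∀ A : Finset L, (A ∈ M ∨ A ∈ N) →
        (∑ i ∈ A, ℓ i = ⌊∑ i ∈ A, lam i⌋ ∨ ∑ i ∈ A, ℓ i = ⌈∑ i ∈ A, lam i⌉)) := by
  have hsing : ∀ i, {i} ∈ M ∪ N := fun i => mem_union_left N (hM.2.1 i)
  obtain ⟨ℓ, hℓ⟩ := (IsLaminar.hasRoundingDirections_union hM.2.2 hN.2.2).exists_rounding hsing lam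
  have hround : ∀ A ∈ M ∪ N, ∑ i ∈ A, ℓ i = ⌊∑ i ∈ A, lam i⌋ ∨ ∑ i ∈ A, ℓ i = ⌈∑ i ∈ A, lam i⌉ :=
    fun A hA => Int.eq_floor_or_eq_ceil_of_le_of_le (hℓ A hA).1 (hℓ A hA).2
  exact ⟨ℓ, fun i => by simpa using hround {i} (hsing i), fun A hA => hround A (mem_union.2 hA)⟩
end

section
/- Let A be a finite set with |A| ≥ tk/δ, and let (A_1, ..., A_k) be a partition of A into k sets. Then there exists a probability distribution over subsets B ⊆ A satisfying: (1) with probability 1, either |B| = t or B = ∅; (2) with probability 1, B is fully contained in a single A_i; (3) for every a ∈ A, Pr[a ∈ B] ≤ t/|A|; (4) Pr[B = ∅] ≤ δ. -/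
/-!
Cut each part greedily into pairwise disjoint blocks of size `t`; fewer than `t` elements of each
part are left over, so the blocks cover all but at most `kt ≤ δ|A|` elements of `A`. Pick each of
the `N` blocks with probability `t/|A|` and `∅` with the remaining probability
`1 - Nt/|A| ≤ kt/|A| ≤ δ`. Since the blocks are disjoint, every element lies in at most one.
-/

open Finset Function

section

variable {α : Type*} [DecidableEq α]

theorem Finset.exists_pairwiseDisjoint_subsets_card_eq (S : Finset α) {t : ℕ} (ht : 0 < t) :
    ∃ F : Finset (Finset α), (∀ B ∈ F, B ⊆ S ∧ #B = t) ∧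
      (F : Set (Finset α)).PairwiseDisjoint id ∧ #S < (#F + 1) * t := by
  induction S using Finset.strongInduction with
  | H S ih =>
    obtain hS | hS := lt_or_ge #S t
    · exact ⟨∅, by simp, by simp, by simpa⟩
    obtain ⟨B, hBS, hB⟩ := exists_subset_card_eq hS
    have hBne : B.Nonempty := card_pos.mp (hB ▸ ht)
    obtain ⟨F, hF, hFdisj, hFcard⟩ := ih _ (sdiff_ssubset hBS hBne)
    have hBF : ∀ C ∈ F, Disjoint B C := fun C hC =>
      disjoint_sdiff.mono_right (hF C hC).1
    have hBnotin : B ∉ F := fun h => hBne.ne_empty (disjoint_self.mp (hBF B h))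
    refine ⟨insert B F, ?_, by rw [coe_insert]; exact hFdisj.insert fun C hC _ => hBF C hC, ?_⟩
    · simp only [mem_insert, forall_eq_or_imp]
      exact ⟨⟨hBS, hB⟩, fun C hC => ⟨(hF C hC).1.trans sdiff_subset, (hF C hC).2⟩⟩
    · rw [card_sdiff_of_subset hBS, hB] at hFcard
      rw [card_insert_of_notMem hBnotin, add_one_mul]
      omega

theorem exists_pairwiseDisjoint_card_eq_subset_parts {ι : Type*} [Fintype ι]
    (parts : ι → Finset α) (hdisj : Pairwise (Disjoint on parts)) {t : ℕ} (ht : 0 < t) :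
    ∃ G : Finset (Finset α), (∀ B ∈ G, #B = t ∧ ∃ i, B ⊆ parts i) ∧
      (G : Set (Finset α)).PairwiseDisjoint id ∧
      #(univ.biUnion parts) ≤ (#G + Fintype.card ι) * t := by
  choose F hF hFdisj hFcard using fun i => (parts i).exists_pairwiseDisjoint_subsets_card_eq ht
  have hcross : ∀ i j, i ≠ j → ∀ B ∈ F i, ∀ C ∈ F j, Disjoint B C := fun i j hij B hB C hC =>
    (hdisj hij).mono (hF i B hB).1 (hF j C hC).1
  have hFF : (Set.univ : Set ι).PairwiseDisjoint F := fun i _ j _ hij =>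
    disjoint_left.mpr fun B hBi hBj =>
      (card_pos.mp ((hF i B hBi).2 ▸ ht)).ne_empty (disjoint_self.mp (hcross i j hij B hBi B hBj))
  refine ⟨univ.biUnion F, ?_, ?_, ?_⟩
  · simp only [mem_biUnion, mem_univ, true_and, forall_exists_index]
    exact fun B i hB => ⟨(hF i B hB).2, i, (hF i B hB).1⟩
  · simp only [coe_biUnion, coe_univ, Set.mem_univ, Set.iUnion_true]
    rintro B hB C hC hBC
    obtain ⟨i, hBi⟩ := Set.mem_iUnion.mp hB
    obtain ⟨j, hCj⟩ := Set.mem_iUnion.mp hC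
    obtain rfl | hij := eq_or_ne i j
    · exact hFdisj i hBi hCj hBC
    · exact hcross i j hij B hBi C hCj
  · rw [card_biUnion fun i _ j _ hij => hdisj hij,
      card_biUnion fun i _ j _ hij => hFF trivial trivial hij]
    calc ∑ i, #(parts i) ≤ ∑ i, (#(F i) + 1) * t := sum_le_sum fun i _ => (hFcard i).le
      _ = (∑ i, #(F i) + Fintype.card ι) * t := by simp [sum_add_distrib, sum_mul, add_mul]

theorem card_filter_mem_le_one_of_pairwiseDisjoint {G : Finset (Finset α)}
    (hG : (G : Set (Finset α)).PairwiseDisjoint id) (a : α) : #{B ∈ G | a ∈ B} ≤ 1 :=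
  card_le_one.mpr fun B hB C hC => by
    rw [mem_filter] at hB hC
    by_contra hBC
    exact disjoint_left.mp (hG hB.1 hC.1 hBC) hB.2 hC.2

theorem card_mul_le_card_of_pairwiseDisjoint {A : Finset α} {G : Finset (Finset α)} {t : ℕ}
    (hsub : ∀ B ∈ G, B ⊆ A) (hcard : ∀ B ∈ G, #B = t)
    (hG : (G : Set (Finset α)).PairwiseDisjoint id) : #G * t ≤ #A :=
  calc #G * t = ∑ B ∈ G, #(A ∩ B) := by
        rw [sum_congr rfl fun B hB => by rw [inter_eq_right.mpr (hsub B hB), hcard B hB],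
          sum_const, smul_eq_mul]
    _ ≤ #A * 1 := sum_card_inter_le fun a _ => card_filter_mem_le_one_of_pairwiseDisjoint hG a
    _ = #A := mul_one _

def familyPick (G : Finset (Finset α)) (c : ℝ) (B : Finset α) : ℝ :=
  (if B ∈ G then c else 0) + (if B = ∅ then 1 - #G * c else 0)

section familyPick

variable {G : Finset (Finset α)} {c : ℝ}

theorem familyPick_nonneg (hc : 0 ≤ c) (hGc : #G * c ≤ 1) (B : Finset α) :
    0 ≤ familyPick G c B := by
  unfold familyPick
  split_ifs <;> linarith

theorem sum_familyPick [Fintype α] (G : Finset (Finset α)) (c : ℝ) :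
    ∑ B, familyPick G c B = 1 := by
  simp [familyPick, sum_add_distrib, sum_ite_mem]

theorem mem_or_eq_empty_of_familyPick_ne_zero {B : Finset α} (h : familyPick G c B ≠ 0) :
    B ∈ G ∨ B = ∅ := by
  by_contra! hB
  simp [familyPick, hB.1, hB.2.ne_empty] at h

theorem familyPick_empty (h : ∅ ∉ G) : familyPick G c ∅ = 1 - #G * c := by
  simp [familyPick, h]

theorem sum_familyPick_of_mem_le [Fintype α] (hG : (G : Set (Finset α)).PairwiseDisjoint id)
    (hc : 0 ≤ c) (a : α) : ∑ B, (if a ∈ B then familyPick G c B else 0) ≤ c := by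
  have hterm : ∀ B, (if a ∈ B then familyPick G c B else 0) =
      if B ∈ {B ∈ G | a ∈ B} then c else 0 := by
    intro B
    by_cases ha : a ∈ B
    · simp [familyPick, ha, ne_empty_of_mem ha]
    · simp [ha]
  simp only [hterm, sum_ite_mem, univ_inter, sum_const, nsmul_eq_mul]
  exact mul_le_of_le_one_left hc
    (by exact_mod_cast card_filter_mem_le_one_of_pairwiseDisjoint hG a)

end familyPick

end

theorem random_pick_exists_general {α : Type*} [Fintype α] [DecidableEq α]
    (t k : ℕ) (δ : ℝ) (ht : 0 < t) (hk : 0 < k) (hδ0 : 0 < δ)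
    (A : Finset α) (parts : Fin k → Finset α)
    (hdisj : ∀ i j, i ≠ j → Disjoint (parts i) (parts j))
    (hcover : A = Finset.univ.biUnion (fun i => parts i))
    (hsize : (t * k : ℝ) / δ ≤ A.card) :
    ∃ p : Finset α → ℝ,
      (∀ B, 0 ≤ p B) ∧
      (∑ B : Finset α, p B = 1) ∧
      (∀ B, p B ≠ 0 → B ⊆ A) ∧
      (∀ B, p B ≠ 0 → B.card = t ∨ B = ∅) ∧
      (∀ B, p B ≠ 0 → B ≠ ∅ → ∃ i, B ⊆ parts i) ∧
      (∀ a ∈ A, ∑ B : Finset α, (if a ∈ B then p B else 0) ≤ (t : ℝ) / A.card) ∧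
      p ∅ ≤ δ := by
  obtain ⟨G, hG, hGdisj, hAG⟩ := exists_pairwiseDisjoint_card_eq_subset_parts parts hdisj ht
  rw [← hcover, Fintype.card_fin] at hAG
  have hGA : ∀ B ∈ G, B ⊆ A := fun B hB => by
    obtain ⟨i, hi⟩ := (hG B hB).2
    exact hi.trans (hcover ▸ subset_biUnion_of_mem parts (mem_univ i))
  have hGt : #G * t ≤ #A :=
    card_mul_le_card_of_pairwiseDisjoint hGA (fun B hB => (hG B hB).1) hGdisj
  have hA : (0 : ℝ) < #A := lt_of_lt_of_le (by positivity) hsize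
  have htk : (t * k : ℝ) ≤ #A * δ := (div_le_iff₀ hδ0).mp hsize
  have hGc : #G * ((t : ℝ) / #A) ≤ 1 := by
    rw [mul_div_assoc', div_le_one hA]
    exact_mod_cast hGt
  have hempty : ∅ ∉ G := fun h => ht.ne (by simpa using (hG ∅ h).1)
  refine ⟨familyPick G (t / #A), familyPick_nonneg (by positivity) hGc, sum_familyPick G _,
    ?_, ?_, ?_, fun a _ => sum_familyPick_of_mem_le hGdisj (by positivity) a, ?_⟩
  · intro B hB
    rcases mem_or_eq_empty_of_familyPick_ne_zero hB with hB | rfl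
    exacts [hGA B hB, empty_subset A]
  · exact fun B hB => (mem_or_eq_empty_of_familyPick_ne_zero hB).imp_left fun hB => (hG B hB).1
  · exact fun B hB hne => (hG B ((mem_or_eq_empty_of_familyPick_ne_zero hB).resolve_right hne)).2
  · have hAG' : (#A : ℝ) ≤ (#G + k) * t := by exact_mod_cast hAG
    rw [familyPick_empty hempty]
    calc 1 - #G * ((t : ℝ) / #A) = (#A - #G * t) / #A := by field_simp
      _ ≤ t * k / #A := by gcongr; linarith
      _ ≤ δ := (div_le_iff₀' hA).mpr htk

/-- Observation on random picks: if `A` is a finite set with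
`|A| ≥ t·k/δ` partitioned into sets `A_1, …, A_k`, then there is a probability
distribution over subsets `B ⊆ A` such that almost surely `|B| = t` or `B = ∅`,
almost surely `B` lies inside a single part, each element is included with
probability at most `t/|A|`, and `Pr[B = ∅] ≤ δ`. -/
theorem random_pick_exists {α : Type*} [Fintype α] [DecidableEq α]
    (t k : ℕ) (δ : ℝ) (ht : 0 < t) (hk : 0 < k) (hδ0 : 0 < δ) (hδ1 : δ ≤ 1)
    (A : Finset α) (parts : Fin k → Finset α)
    (hdisj : ∀ i j, i ≠ j → Disjoint (parts i) (parts j))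
    (hcover : A = Finset.univ.biUnion (fun i => parts i))
    (hsize : (t * k : ℝ) / δ ≤ A.card) :
    ∃ p : Finset α → ℝ,
      (∀ B, 0 ≤ p B) ∧
      (∑ B : Finset α, p B = 1) ∧
      (∀ B, p B ≠ 0 → B ⊆ A) ∧
      (∀ B, p B ≠ 0 → B.card = t ∨ B = ∅) ∧
      (∀ B, p B ≠ 0 → B ≠ ∅ → ∃ i, B ⊆ parts i) ∧
      (∀ a ∈ A, ∑ B : Finset α, (if a ∈ B then p B else 0) ≤ (t : ℝ) / A.card) ∧
      p ∅ ≤ δ :=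
  random_pick_exists_general t k δ ht hk hδ0 A parts hdisj hcover hsize
end

section
/- There exists a function R: ℕ × ℕ × ℕ × (0,1] → ℕ so that the following holds. Let G = (V_1, ..., V_k, c) be a k-partite Σ-chart with n ≥ R(|Σ|, k, t, α) vertices in each class, and let B ⊆ ⋃_{i<j}(V_i × V_j) be a set of 'undesirable' edges with |B| ≤ ε·C(k,2)·n². Then G contains an induced subchart (W_1, ..., W_k) such that: (1) |W_i| = t for every i; (2) the coloring c restricted to W_i × W_j is constant for every 1 ≤ i < j ≤ k; (3) |B ∩ ⋃_{i<j}(W_i × W_j)| ≤ (1+α)·ε·C(k,2)·t². -/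
/-!
The theorem follows from a weighted version proved by induction on the number of classes: for
nonnegative pair weights `β` and vertex weights `ω`, some homogeneous choice of `t`-sets has weight
at most `(1 + a)` times that of uniformly random `t`-sets, `(t/n)² β(V) + (t/n) ω(V)`.

In the step, first pick an `m`-subset `X` of the last class of at most average weight. Charge
every lower vertex `u` with `t/m · β(u, X)`, fix the colours of the lower vertices towards `X` and
recurse on the lower classes with slack `a/3`. Relative to the `t`-sets `W'` chosen there, the
vertices of `X` fall into at most `L` colour profiles, and the profile classes with fewer than `t`
elements cover at most `L (t - 1)` vertices. The remaining classes hold `t`-subsets whose weight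
is at most `t / (m - L (t - 1))` times that of `X`. Since `m` is large compared with `L t`, this
loss and the recursive one are both at most `1 + a/3`, and `(1 + a/3)² ≤ 1 + a`.
-/

open Finset

namespace Finset

lemma exists_subset_card_eq_card_mul_sum_le {ι : Type*} [DecidableEq ι] (s : Finset ι)
    (f : ι → ℝ) {t : ℕ} (ht : t ≤ #s) :
    ∃ T ⊆ s, #T = t ∧ #s * ∑ x ∈ T, f x ≤ t * ∑ x ∈ s, f x := by
  obtain ⟨T, hTs, hT⟩ := (s.powersetCard t).exists_min_image (fun T => ∑ x ∈ T, f x)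
    (powersetCard_nonempty.mpr ht)
  rw [mem_powersetCard] at hTs
  -- exchanging `x ∈ T` for `y ∈ s \ T` cannot decrease the weight of `T`
  have hmin : ∀ x ∈ T, ∀ y ∈ s \ T, f x ≤ f y := by
    intro x hx y hy
    rw [mem_sdiff] at hy
    have hy' : y ∉ T.erase x := fun h => hy.2 (mem_of_mem_erase h)
    have hmem : insert y (T.erase x) ∈ s.powersetCard t := by
      rw [mem_powersetCard, card_insert_of_notMem hy', card_erase_of_mem hx]
      refine ⟨insert_subset hy.1 ((erase_subset x T).trans hTs.1), ?_⟩
      have := card_pos.mpr ⟨x, hx⟩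
      omega
    have := hT _ hmem
    rw [sum_insert hy'] at this
    linarith [sum_erase_add T f hx]
  refine ⟨T, hTs.1, hTs.2, ?_⟩
  have hexchange : (#(s \ T) : ℝ) * ∑ x ∈ T, f x ≤ t * ∑ y ∈ s \ T, f y := by
    calc (#(s \ T) : ℝ) * ∑ x ∈ T, f x = ∑ _y ∈ s \ T, ∑ x ∈ T, f x := by
          rw [sum_const, nsmul_eq_mul]
      _ ≤ ∑ y ∈ s \ T, ∑ _x ∈ T, f y :=
          sum_le_sum fun y hy => sum_le_sum fun x hx => hmin x hx y hy
      _ = t * ∑ y ∈ s \ T, f y := by simp only [sum_const, hTs.2, nsmul_eq_mul, mul_sum]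
  have hcard : (#s : ℝ) = t + #(s \ T) := by
    rw [card_sdiff_of_subset hTs.1, hTs.2, Nat.cast_sub (hTs.2 ▸ card_le_card hTs.1)]
    ring
  rw [← sum_sdiff hTs.1, hcard]
  linarith

lemma card_le_sum_card_large_fibers_add {ι Λ : Type*} [DecidableEq Λ] (s : Finset ι)
    (σ : ι → Λ) {L : ℕ} (hL : #(s.image σ) ≤ L) (t : ℕ) :
    #s ≤ ∑ l ∈ (s.image σ).filter (fun l => t ≤ #{x ∈ s | σ x = l}), #{x ∈ s | σ x = l}
      + L * (t - 1) := by
  rw [card_eq_sum_card_image σ s,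
    ← sum_filter_add_sum_filter_not _ (fun l => t ≤ #{x ∈ s | σ x = l})]
  gcongr
  calc ∑ l ∈ (s.image σ).filter (fun l => ¬ t ≤ #{x ∈ s | σ x = l}), #{x ∈ s | σ x = l}
      ≤ ∑ _l ∈ (s.image σ).filter (fun l => ¬ t ≤ #{x ∈ s | σ x = l}), (t - 1) :=
        sum_le_sum fun l hl => by have := (mem_filter.mp hl).2; omega
    _ ≤ L * (t - 1) := by
        rw [sum_const, smul_eq_mul]
        exact Nat.mul_le_mul_right _ ((card_filter_le _ _).trans hL)

lemma exists_subset_card_eq_mul_sum_le_of_card_image_le {ι Λ : Type*} [DecidableEq ι]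
    [DecidableEq Λ] (s : Finset ι) (σ : ι → Λ) {f : ι → ℝ} (hf : ∀ x ∈ s, 0 ≤ f x) {L t : ℕ}
    (hL : #(s.image σ) ≤ L) (hs : L * (t - 1) < #s) :
    ∃ T ⊆ s, #T = t ∧ (∀ x ∈ T, ∀ y ∈ T, σ x = σ y) ∧
      (#s - L * (t - 1 : ℕ) : ℝ) * ∑ x ∈ T, f x ≤ t * ∑ x ∈ s, f x := by
  set fiber : Λ → Finset ι := fun l => {x ∈ s | σ x = l}
  set large := (s.image σ).filter (fun l => t ≤ #(fiber l))
  have hlarge : #s ≤ ∑ l ∈ large, #(fiber l) + L * (t - 1) :=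
    card_le_sum_card_large_fibers_add s σ hL t
  have hne : large.Nonempty := by
    by_contra h
    rw [not_nonempty_iff_eq_empty.mp h, sum_empty] at hlarge
    omega
  choose! T hTsub hTcard hT using fun l (hl : l ∈ large) =>
    exists_subset_card_eq_card_mul_sum_le (fiber l) f (mem_filter.mp hl).2
  obtain ⟨l, hl, hlmin⟩ := large.exists_min_image (fun l => ∑ x ∈ T l, f x) hne
  have hTs : T l ⊆ s := (hTsub l hl).trans (filter_subset _ _)
  refine ⟨T l, hTs, hTcard l hl, fun x hx y hy => ?_, ?_⟩
  · rw [(mem_filter.mp (hTsub l hl hx)).2, (mem_filter.mp (hTsub l hl hy)).2]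
  calc (#s - L * (t - 1 : ℕ) : ℝ) * ∑ x ∈ T l, f x
      ≤ (∑ l' ∈ large, #(fiber l') : ℕ) * ∑ x ∈ T l, f x := by
        gcongr
        · exact sum_nonneg fun x hx => hf x (hTs hx)
        · rw [sub_le_iff_le_add]; exact_mod_cast hlarge
    _ = ∑ l' ∈ large, #(fiber l') * ∑ x ∈ T l, f x := by push_cast; rw [sum_mul]
    _ ≤ ∑ l' ∈ large, #(fiber l') * ∑ x ∈ T l', f x :=
        sum_le_sum fun l' hl' => mul_le_mul_of_nonneg_left (hlmin l' hl') (Nat.cast_nonneg _)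
    _ ≤ ∑ l' ∈ large, t * ∑ x ∈ fiber l', f x := sum_le_sum fun l' hl' => hT l' hl'
    _ ≤ t * ∑ x ∈ s, f x := by
        rw [← mul_sum, ← sum_fiberwise_of_maps_to (fun x hx => mem_image_of_mem σ hx) f]
        refine mul_le_mul_of_nonneg_left ?_ (Nat.cast_nonneg _)
        refine sum_le_sum_of_subset_of_nonneg (filter_subset _ _) fun l _ _ => ?_
        exact sum_nonneg fun x hx => hf x (mem_filter.mp hx).1

end Finset

lemma add_le_one_add_mul_add {a K p q A r F f : ℝ} (ha : 0 ≤ a) (ha3 : a ≤ 3) (hK : 0 ≤ K)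
    (hp : 0 ≤ p) (hq : 0 ≤ q) (h₁ : K + p ≤ (1 + a / 3) * (A + r))
    (h₂ : f ≤ (1 + a / 3) * (p + q)) (h₃ : r + q ≤ F) :
    K + f ≤ (1 + a) * (A + F) := by
  have hAr : 0 ≤ A + r := by nlinarith
  have hsq : (1 + a / 3) ^ 2 ≤ 1 + a := by nlinarith
  calc K + f ≤ (1 + a / 3) * (K + p) + (1 + a / 3) * q := by nlinarith
    _ ≤ (1 + a / 3) * ((1 + a / 3) * (A + r)) + (1 + a / 3) * ((1 + a / 3) * q) := by
        gcongr; nlinarith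
    _ = (1 + a / 3) ^ 2 * (A + r + q) := by ring
    _ ≤ (1 + a / 3) ^ 2 * (A + F) := mul_le_mul_of_nonneg_left (by linarith) (by positivity)
    _ ≤ (1 + a) * (A + F) := by gcongr; linarith

section ChartWeights

variable {α C : Type*}

def crossWeight (β : α → α → ℝ) {k : ℕ} (W : Fin k → Finset α) : ℝ :=
  ∑ i, ∑ j, if i < j then ∑ u ∈ W i, ∑ v ∈ W j, β u v else 0

def vertexWeight (ω : α → ℝ) {k : ℕ} (W : Fin k → Finset α) : ℝ :=
  ∑ i, ∑ u ∈ W i, ω u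

def inWeight (β : α → α → ℝ) {k : ℕ} (W : Fin k → Finset α) (v : α) : ℝ :=
  ∑ i, ∑ u ∈ W i, β u v

lemma crossWeight_nonneg {β : α → α → ℝ} (hβ : ∀ u v, 0 ≤ β u v) {k : ℕ}
    (W : Fin k → Finset α) : 0 ≤ crossWeight β W :=
  sum_nonneg fun _ _ => sum_nonneg fun _ _ => by
    split_ifs
    exacts [sum_nonneg fun u _ => sum_nonneg fun v _ => hβ u v, le_rfl]

lemma vertexWeight_nonneg {ω : α → ℝ} (hω : ∀ u, 0 ≤ ω u) {k : ℕ} (W : Fin k → Finset α) :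
    0 ≤ vertexWeight ω W :=
  sum_nonneg fun _ _ => sum_nonneg fun u _ => hω u

lemma inWeight_nonneg {β : α → α → ℝ} (hβ : ∀ u v, 0 ≤ β u v) {k : ℕ} (W : Fin k → Finset α)
    (v : α) : 0 ≤ inWeight β W v :=
  sum_nonneg fun _ _ => sum_nonneg fun u _ => hβ u v

lemma crossWeight_snoc (β : α → α → ℝ) {k : ℕ} (W : Fin k → Finset α) (T : Finset α) :
    crossWeight β (Fin.snoc W T : Fin (k + 1) → Finset α)
      = crossWeight β W + ∑ v ∈ T, inWeight β W v := by
  have hlast (j : Fin (k + 1)) : ¬ Fin.last k < j := not_lt.mpr (Fin.le_last j)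
  simp only [crossWeight, inWeight, Fin.sum_univ_castSucc, Fin.snoc_castSucc, Fin.snoc_last,
    Fin.castSucc_lt_castSucc_iff, Fin.castSucc_lt_last, if_true, sum_add_distrib, hlast,
    if_false, sum_const_zero, add_zero]
  rw [sum_comm (s := T)]
  exact congrArg _ (sum_congr rfl fun i _ => sum_comm)

lemma vertexWeight_snoc (ω : α → ℝ) {k : ℕ} (W : Fin k → Finset α) (T : Finset α) :
    vertexWeight ω (Fin.snoc W T : Fin (k + 1) → Finset α)
      = vertexWeight ω W + ∑ v ∈ T, ω v := by
  simp [vertexWeight, Fin.sum_univ_castSucc]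

lemma vertexWeight_add_mul_sum (ω : α → ℝ) (β : α → α → ℝ) (r : ℝ) (X : Finset α) {k : ℕ}
    (W : Fin k → Finset α) :
    vertexWeight (fun u => ω u + r * ∑ x ∈ X, β u x) W
      = vertexWeight ω W + r * ∑ x ∈ X, inWeight β W x := by
  simp only [vertexWeight, inWeight, sum_add_distrib, mul_sum]
  congr 1
  rw [sum_comm]
  exact sum_congr rfl fun i _ => sum_comm

/-- One induction step: `X ⊆ VL` is the `m`-sample of the last class, `W'` is the recursive
choice under the charged vertex weights, and `Wl ⊆ X` is chosen against `W'`. -/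
lemma crossWeight_add_vertexWeight_snoc_le {β : α → α → ℝ} (hβ : ∀ u v, 0 ≤ β u v)
    {ω : α → ℝ} (hω : ∀ u, 0 ≤ ω u) {a : ℝ} (ha : 0 ≤ a) (ha3 : a ≤ 3) {n m t : ℕ}
    (hn : 0 < n) (hm : 0 < m) {k : ℕ}
    {V' W' : Fin k → Finset α} {VL X Wl : Finset α}
    (hX : n * ∑ w ∈ X, ((t / n : ℝ) * inWeight β V' w + ω w)
      ≤ m * ∑ w ∈ VL, ((t / n : ℝ) * inWeight β V' w + ω w))
    (hW' : crossWeight β W' + vertexWeight (fun u => ω u + t / m * ∑ x ∈ X, β u x) W'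
      ≤ (1 + a / 3) * ((t / n : ℝ) ^ 2 * crossWeight β V'
        + t / n * vertexWeight (fun u => ω u + t / m * ∑ x ∈ X, β u x) V'))
    (hWl : m * ∑ w ∈ Wl, (inWeight β W' w + ω w)
      ≤ (1 + a / 3) * (t * ∑ w ∈ X, (inWeight β W' w + ω w))) :
    crossWeight β (Fin.snoc W' Wl : Fin (k + 1) → Finset α)
        + vertexWeight ω (Fin.snoc W' Wl : Fin (k + 1) → Finset α)
      ≤ (1 + a) * ((t / n : ℝ) ^ 2 * crossWeight β (Fin.snoc V' VL : Fin (k + 1) → Finset α)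
        + t / n * vertexWeight ω (Fin.snoc V' VL : Fin (k + 1) → Finset α)) := by
  have hn' : (0 : ℝ) < n := by exact_mod_cast hn
  have hm' : (0 : ℝ) < m := by exact_mod_cast hm
  rw [vertexWeight_add_mul_sum, vertexWeight_add_mul_sum] at hW'
  rw [crossWeight_snoc, vertexWeight_snoc, crossWeight_snoc, vertexWeight_snoc]
  set g := fun w => (t / n : ℝ) * inWeight β V' w + ω w
  have h₂ : ∑ w ∈ Wl, (inWeight β W' w + ω w)
      ≤ (1 + a / 3) * (t / m * ∑ x ∈ X, inWeight β W' x + t / m * ∑ x ∈ X, ω x) := by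
    rw [← mul_add, ← sum_add_distrib, div_mul_eq_mul_div, mul_div_assoc', le_div_iff₀ hm']
    linarith
  have h₃ : t / n * (t / m * ∑ x ∈ X, inWeight β V' x) + t / m * ∑ x ∈ X, ω x
      ≤ (t / n : ℝ) ^ 2 * ∑ v ∈ VL, inWeight β V' v + t / n * ∑ v ∈ VL, ω v := by
    have hXg : (t / m : ℝ) * ∑ x ∈ X, g x ≤ t / n * ∑ v ∈ VL, g v := by
      rw [div_mul_eq_mul_div, div_mul_eq_mul_div, div_le_div_iff₀ hm' hn']
      nlinarith [(by positivity : (0 : ℝ) ≤ t)]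
    simp only [g, sum_add_distrib, ← mul_sum] at hXg
    linarith
  have h₁ : crossWeight β W' + vertexWeight ω W' + t / m * ∑ x ∈ X, inWeight β W' x
      ≤ (1 + a / 3) * (((t / n : ℝ) ^ 2 * crossWeight β V' + t / n * vertexWeight ω V')
        + t / n * (t / m * ∑ x ∈ X, inWeight β V' x)) := by
    linarith
  have := add_le_one_add_mul_add ha ha3
    (add_nonneg (crossWeight_nonneg hβ W') (vertexWeight_nonneg hω W'))
    (mul_nonneg (by positivity) (sum_nonneg fun x _ => inWeight_nonneg hβ W' x))
    (mul_nonneg (by positivity) (sum_nonneg fun x _ => hω x)) h₁ h₂ h₃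
  rw [sum_add_distrib] at this
  convert this using 1 <;> ring

def IsChartHomogeneous (c : α → α → C) {k : ℕ} (W : Fin k → Finset α) : Prop :=
  ∀ i j, i < j → ∀ v ∈ W i, ∀ w ∈ W j, ∀ v' ∈ W i, ∀ w' ∈ W j, c v w = c v' w'

lemma IsChartHomogeneous.snoc {c : α → α → C} {k : ℕ} {W : Fin k → Finset α} {T : Finset α}
    (hW : IsChartHomogeneous c W)
    (hT : ∀ i, ∀ v ∈ W i, ∀ w ∈ T, ∀ v' ∈ W i, ∀ w' ∈ T, c v w = c v' w') :
    IsChartHomogeneous c (Fin.snoc W T : Fin (k + 1) → Finset α) := by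
  intro i j hij
  induction j using Fin.lastCases with
  | last =>
    obtain ⟨i, rfl⟩ := Fin.exists_castSucc_eq.mpr (Fin.ne_last_of_lt hij)
    simpa using hT i
  | cast j =>
    obtain ⟨i, rfl⟩ :=
      Fin.exists_castSucc_eq.mpr (Fin.ne_last_of_lt (hij.trans (Fin.castSucc_lt_last j)))
    simpa using hW i j (Fin.castSucc_lt_castSucc_iff.mp hij)

/-- The sample size `m` for the last of `k + 1` classes. `s ^ (y + k * t)` bounds the number of
colour profiles of a vertex towards the `y` fixed vertices and the `k * t` lower chosen ones; the
factor `⌈3 / a⌉₊ + 1` makes `m / (m - s ^ (y + k * t) * (t - 1)) ≤ 1 + a / 3`. -/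
noncomputable def chartRamseyStep (s y t k : ℕ) (a : ℝ) : ℕ :=
  s ^ (y + k * t) * t * (⌈3 / a⌉₊ + 1) + 1

noncomputable def chartRamseyBound (s t : ℕ) : ℕ → ℕ → ℝ → ℕ
  | 0, _, _ => 0
  | k + 1, y, a =>
    max (chartRamseyStep s y t k a)
      (chartRamseyBound s t k (y + chartRamseyStep s y t k a) (a / 3))

lemma mul_sub_one_lt_chartRamseyStep (s y t k : ℕ) (a : ℝ) :
    s ^ (y + k * t) * (t - 1) < chartRamseyStep s y t k a := by
  unfold chartRamseyStep
  have := Nat.mul_le_mul_left (s ^ (y + k * t)) (Nat.sub_le t 1)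
  nlinarith [Nat.zero_le (s ^ (y + k * t) * t * ⌈3 / a⌉₊)]

lemma chartRamseyStep_le (s y t k : ℕ) {a : ℝ} (ha : 0 < a) :
    (chartRamseyStep s y t k a : ℝ)
      ≤ (1 + a / 3) * (chartRamseyStep s y t k a - (s ^ (y + k * t) : ℕ) * (t - 1 : ℕ)) := by
  unfold chartRamseyStep
  generalize s ^ (y + k * t) = L
  have hceil : 3 / a ≤ ⌈3 / a⌉₊ := Nat.le_ceil _
  have hLt : (L : ℝ) * (t - 1 : ℕ) ≤ L * t := by gcongr; exact_mod_cast Nat.sub_le t 1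
  have : (L * t : ℝ) ≤ a / 3 * (L * t * ⌈3 / a⌉₊) := by
    have := mul_le_mul_of_nonneg_left hceil (by positivity : (0 : ℝ) ≤ a / 3 * (L * t))
    rw [show a / 3 * (L * t) * (3 / a) = L * t by field_simp] at this
    linarith
  push_cast
  nlinarith

variable [DecidableEq α]

def colorProfile (c : α → α → C) (Y Z : Finset α) (w : α) : (Y → C) × (Z → C) :=
  (fun u => c w u, fun u => c u w)

lemma card_image_colorProfile_le [Fintype C] [DecidableEq C] (c : α → α → C)
    {X Y Z : Finset α} (hX : X.Nonempty) {y z : ℕ} (hY : #Y ≤ y) (hZ : #Z ≤ z) :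
    #(X.image (colorProfile c Y Z)) ≤ Fintype.card C ^ (y + z) := by
  obtain ⟨x, -⟩ := hX
  have hC : 0 < Fintype.card C := Fintype.card_pos_iff.mpr ⟨c x x⟩
  calc _ ≤ Fintype.card ((Y → C) × (Z → C)) := card_le_univ _
    _ = Fintype.card C ^ #Y * Fintype.card C ^ #Z := by
        simp only [Fintype.card_prod, Fintype.card_fun, Fintype.card_coe]
    _ ≤ Fintype.card C ^ y * Fintype.card C ^ z := by gcongr
    _ = Fintype.card C ^ (y + z) := (pow_add _ _ _).symm

lemma isChartHomogeneous_snoc_of_colorProfile_eq {c : α → α → C} {k : ℕ}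
    {W' : Fin k → Finset α} {X Y Wl : Finset α}
    (hW' : IsChartHomogeneous c W')
    (hW'Y : ∀ i, ∀ u ∈ W' i, ∀ u' ∈ W' i, ∀ z ∈ Y ∪ X, c u z = c u' z)
    (hWlX : Wl ⊆ X) (hWl : ∀ w ∈ Wl, ∀ w' ∈ Wl,
      colorProfile c Y (univ.biUnion W') w = colorProfile c Y (univ.biUnion W') w') :
    IsChartHomogeneous c (Fin.snoc W' Wl : Fin (k + 1) → Finset α) ∧
      ∀ i, ∀ u ∈ (Fin.snoc W' Wl : Fin (k + 1) → Finset α) i,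
        ∀ u' ∈ (Fin.snoc W' Wl : Fin (k + 1) → Finset α) i, ∀ z ∈ Y, c u z = c u' z := by
  refine ⟨hW'.snoc fun i v hv w hw v' hv' w' hw' => ?_, fun i => ?_⟩
  · rw [hW'Y i v hv v' hv' w (mem_union_right _ (hWlX hw))]
    exact congrFun (congrArg Prod.snd (hWl w hw w' hw'))
      ⟨v', mem_biUnion.mpr ⟨i, mem_univ _, hv'⟩⟩
  induction i using Fin.lastCases with
  | last =>
    simp only [Fin.snoc_last]
    exact fun u hu u' hu' z hz => congrFun (congrArg Prod.fst (hWl u hu u' hu')) ⟨z, hz⟩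
  | cast i =>
    simp only [Fin.snoc_castSucc]
    exact fun u hu u' hu' z hz => hW'Y i u hu u' hu' z (mem_union_left _ hz)

/-- The constant colours towards `Y` are how the recursion fixes the colours towards the samples
taken in the later classes. -/
theorem exists_isChartHomogeneous_weight_le [Fintype C] [DecidableEq C] (c : α → α → C)
    {β : α → α → ℝ} (hβ : ∀ u v, 0 ≤ β u v) {t n : ℕ} (k y : ℕ) {a : ℝ} (ha : 0 < a)
    (ha3 : a ≤ 3) {Y : Finset α} (hY : #Y ≤ y) {ω : α → ℝ} (hω : ∀ u, 0 ≤ ω u)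
    {V : Fin k → Finset α} (hV : ∀ i, #(V i) = n)
    (hn : chartRamseyBound (Fintype.card C) t k y a ≤ n) :
    ∃ W : Fin k → Finset α, (∀ i, W i ⊆ V i) ∧ (∀ i, #(W i) = t) ∧ IsChartHomogeneous c W ∧
      (∀ i, ∀ u ∈ W i, ∀ u' ∈ W i, ∀ z ∈ Y, c u z = c u' z) ∧
      crossWeight β W + vertexWeight ω W
        ≤ (1 + a) * ((t / n : ℝ) ^ 2 * crossWeight β V + t / n * vertexWeight ω V) := by
  induction k generalizing y a Y ω with
  | zero =>
    refine ⟨Fin.elim0, fun i => i.elim0, fun i => i.elim0, fun i => i.elim0, fun i => i.elim0,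
      ?_⟩
    simp [crossWeight, vertexWeight]
  | succ k ih =>
    set m := chartRamseyStep (Fintype.card C) y t k a
    have hmn : m ≤ n := (le_max_left _ _).trans hn
    have hm : 0 < m := Nat.succ_pos _
    obtain ⟨V', VL, rfl⟩ : ∃ V' VL, V = (Fin.snoc V' VL : Fin (k + 1) → Finset α) :=
      ⟨Fin.init V, V (Fin.last k), (Fin.snoc_init_self V).symm⟩
    have hVL : #VL = n := by simpa using hV (Fin.last k)
    obtain ⟨X, hXVL, hXcard, hX⟩ := VL.exists_subset_card_eq_card_mul_sum_le
      (fun w => (t / n : ℝ) * inWeight β V' w + ω w) (hVL ▸ hmn)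
    obtain ⟨W', hW'V, hW'card, hW'hom, hW'Y, hW'⟩ := ih (y + m) (by positivity) (by linarith)
      (Y := Y ∪ X) ((card_union_le Y X).trans (by omega))
      (ω := fun u => ω u + t / m * ∑ x ∈ X, β u x)
      (fun u => add_nonneg (hω u) (mul_nonneg (by positivity) (sum_nonneg fun x _ => hβ u x)))
      (fun i => by simpa using hV i.castSucc) ((le_max_right _ _).trans hn)
    obtain ⟨Wl, hWlX, hWlcard, hWlσ, hWl⟩ :=
      X.exists_subset_card_eq_mul_sum_le_of_card_image_le (t := t)
      (colorProfile c Y (univ.biUnion W'))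
      (fun w _ => add_nonneg (inWeight_nonneg hβ W' w) (hω w))
      (card_image_colorProfile_le c (card_pos.mp (hXcard ▸ hm)) hY
        (by simpa using card_biUnion_le_card_mul univ W' t fun i _ => (hW'card i).le))
      (by rw [hXcard]; exact mul_sub_one_lt_chartRamseyStep _ y t k a)
    obtain ⟨hhom, hconst⟩ := isChartHomogeneous_snoc_of_colorProfile_eq hW'hom hW'Y hWlX hWlσ
    refine ⟨Fin.snoc W' Wl, fun i => ?_, fun i => ?_, hhom, hconst, ?_⟩
    · induction i using Fin.lastCases <;> simp [hWlX.trans hXVL, hW'V]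
    · induction i using Fin.lastCases <;> simp [hWlcard, hW'card]
    · refine crossWeight_add_vertexWeight_snoc_le hβ hω ha.le ha3 (hm.trans_le hmn) hm
        (by rwa [hVL] at hX) hW' ?_
      have hf : 0 ≤ ∑ w ∈ Wl, (inWeight β W' w + ω w) :=
        sum_nonneg fun w _ => add_nonneg (inWeight_nonneg hβ W' w) (hω w)
      rw [hXcard] at hWl
      nlinarith [chartRamseyStep_le (Fintype.card C) y t k ha]

lemma crossWeight_indicator (B : Finset (α × α)) {k : ℕ} (W : Fin k → Finset α) :
    crossWeight (fun u v => if (u, v) ∈ B then 1 else 0) W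
      = ∑ e ∈ B, ∑ i, ∑ j, if i < j ∧ e.1 ∈ W i ∧ e.2 ∈ W j then (1 : ℝ) else 0 := by
  have hpair (S T : Finset α) : ∑ u ∈ S, ∑ v ∈ T, (if (u, v) ∈ B then (1 : ℝ) else 0)
      = ∑ e ∈ B, if e.1 ∈ S ∧ e.2 ∈ T then 1 else 0 := by
    rw [← sum_product', sum_boole, sum_boole]
    congr 2
    ext e
    simp [and_comm]
  calc crossWeight (fun u v => if (u, v) ∈ B then 1 else 0) W
      = ∑ i, ∑ j, ∑ e ∈ B, if i < j ∧ e.1 ∈ W i ∧ e.2 ∈ W j then (1 : ℝ) else 0 := by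
        refine sum_congr rfl fun i _ => sum_congr rfl fun j _ => ?_
        by_cases h : i < j
        · simp only [h, if_true, true_and, hpair]
        · simp [h]
    _ = _ := by rw [sum_congr rfl fun i _ => sum_comm, sum_comm]

lemma card_filter_le_crossWeight (B : Finset (α × α)) {k : ℕ} (W : Fin k → Finset α) :
    (#{e ∈ B | ∃ i j, i < j ∧ e.1 ∈ W i ∧ e.2 ∈ W j} : ℝ)
      ≤ crossWeight (fun u v => if (u, v) ∈ B then 1 else 0) W := by
  rw [crossWeight_indicator, card_filter, Nat.cast_sum]
  refine sum_le_sum fun e _ => ?_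
  have hnonneg (i j : Fin k) : (0 : ℝ) ≤ if i < j ∧ e.1 ∈ W i ∧ e.2 ∈ W j then 1 else 0 := by
    split_ifs <;> norm_num
  split_ifs with h
  · obtain ⟨i, j, hij⟩ := h
    calc ((1 : ℕ) : ℝ) = if i < j ∧ e.1 ∈ W i ∧ e.2 ∈ W j then 1 else 0 := by simp [hij]
      _ ≤ _ := single_le_sum (fun j _ => hnonneg i j) (mem_univ j)
      _ ≤ _ := single_le_sum (fun i _ => sum_nonneg fun j _ => hnonneg i j) (mem_univ i)
  · exact_mod_cast sum_nonneg fun i _ => sum_nonneg fun j _ => hnonneg i j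

lemma sum_indicator_mem_le_one {k : ℕ} {V : Fin k → Finset α}
    (hV : ∀ i j, i ≠ j → Disjoint (V i) (V j)) (x : α) :
    ∑ i, (if x ∈ V i then (1 : ℝ) else 0) ≤ 1 := by
  rw [sum_boole]
  exact_mod_cast card_le_one.mpr fun i hi j hj => by
    by_contra h
    exact disjoint_left.mp (hV i j h) (mem_filter.mp hi).2 (mem_filter.mp hj).2

lemma crossWeight_indicator_le_card (B : Finset (α × α)) {k : ℕ} {V : Fin k → Finset α}
    (hV : ∀ i j, i ≠ j → Disjoint (V i) (V j)) :
    crossWeight (fun u v => if (u, v) ∈ B then 1 else 0) V ≤ #B := by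
  rw [crossWeight_indicator, card_eq_sum_ones, Nat.cast_sum]
  refine sum_le_sum fun e _ => ?_
  calc ∑ i, ∑ j, (if i < j ∧ e.1 ∈ V i ∧ e.2 ∈ V j then (1 : ℝ) else 0)
      ≤ ∑ i, ∑ j, (if e.1 ∈ V i then (1 : ℝ) else 0) * (if e.2 ∈ V j then 1 else 0) := by
        gcongr with i _ j _
        split_ifs <;> simp_all
    _ = (∑ i, if e.1 ∈ V i then (1 : ℝ) else 0) * ∑ j, if e.2 ∈ V j then (1 : ℝ) else 0 := by
        rw [sum_mul_sum]
    _ ≤ 1 * 1 := by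
        gcongr
        · exact sum_indicator_mem_le_one hV _
        · exact sum_indicator_mem_le_one hV _
    _ = ((1 : ℕ) : ℝ) := by norm_num

end ChartWeights

/-- quantitative undesirability-preserving Ramsey for charts:
there is `R(s,k,t,α)` such that in any `k`-partite chart with `s` colors, `n ≥ R`
vertices per class, and a set `B` of undesirable edges of size at most `ε·C(k,2)·n²`,
one can pick `W_i ⊆ V_i` of size `t` that are pairwise monochromatic, containing at
most `(1+α)·ε·C(k,2)·t²` undesirable edges. -/
theorem quantitative_chart_ramsey :
    ∃ R : ℕ → ℕ → ℕ → ℝ → ℕ,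
      ∀ (V_ C : Type) [Fintype V_] [DecidableEq V_] [Fintype C] [DecidableEq C]
        (k t n : ℕ) (a ε : ℝ), 0 < a → a ≤ 1 → 0 ≤ ε →
        ∀ (V : Fin k → Finset V_) (c : V_ → V_ → C) (B : Finset (V_ × V_)),
          (∀ i j, i ≠ j → Disjoint (V i) (V j)) →
          (∀ i, (V i).card = n) →
          R (Fintype.card C) k t a ≤ n →
          (∀ e ∈ B, ∃ i j : Fin k, i < j ∧ e.1 ∈ V i ∧ e.2 ∈ V j) →
          (B.card : ℝ) ≤ ε * (k.choose 2) * n ^ 2 →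
          ∃ W : Fin k → Finset V_,
            (∀ i, W i ⊆ V i) ∧
            (∀ i, (W i).card = t) ∧
            (∀ i j : Fin k, i < j →
              ∀ v ∈ W i, ∀ w ∈ W j, ∀ v' ∈ W i, ∀ w' ∈ W j, c v w = c v' w') ∧
            (((B.filter (fun e => ∃ i j : Fin k, i < j ∧ e.1 ∈ W i ∧ e.2 ∈ W j)).card : ℝ)
              ≤ (1 + a) * ε * (k.choose 2) * t ^ 2) := by
  refine ⟨fun s k t a => chartRamseyBound s t k 0 a, ?_⟩
  intro V_ C _ _ _ _ k t n a ε ha ha1 hε V c B hdisj hcard hR _ hB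
  obtain ⟨W, hWV, hWcard, hWhom, -, hW⟩ := exists_isChartHomogeneous_weight_le c
    (β := fun u v => if (u, v) ∈ B then 1 else 0) (fun u v => by split_ifs <;> norm_num)
    k 0 ha (by linarith) (Y := ∅) le_rfl (ω := 0) (fun _ => le_rfl) hcard hR
  refine ⟨W, hWV, hWcard, hWhom, ?_⟩
  have hscale : (t / n : ℝ) ^ 2 * #B ≤ ε * k.choose 2 * t ^ 2 := by
    rcases eq_or_ne n 0 with rfl | hn
    · simp only [CharP.cast_eq_zero, div_zero, ne_eq, OfNat.ofNat_ne_zero, not_false_eq_true,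
        zero_pow, zero_mul]
      positivity
    · calc (t / n : ℝ) ^ 2 * #B ≤ (t / n : ℝ) ^ 2 * (ε * k.choose 2 * n ^ 2) := by gcongr
        _ = ε * k.choose 2 * t ^ 2 := by field_simp
  simp only [vertexWeight, Pi.zero_apply, sum_const_zero, mul_zero, add_zero] at hW
  calc _ ≤ crossWeight (fun u v => if (u, v) ∈ B then 1 else 0) W :=
        card_filter_le_crossWeight B W
    _ ≤ (1 + a) * ((t / n : ℝ) ^ 2 * #B) := by
        refine hW.trans (mul_le_mul_of_nonneg_left ?_ (by linarith))
        exact mul_le_mul_of_nonneg_left (crossWeight_indicator_le_card B hdisj) (by positivity)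
    _ ≤ (1 + a) * ε * k.choose 2 * t ^ 2 := by
        rw [mul_assoc, mul_assoc, ← mul_assoc ε]
        exact mul_le_mul_of_nonneg_left hscale (by linarith)
end

section
/- For any α > 0, m, k, and all sufficiently large l, there exist infinitely many n for which there is a graph G on n vertices and a set B of at most (1/(mk))·C(n,2) 'undesirable' pairs of vertices, such that G has no independent set of size l, and every clique on l vertices in G contains at least (1/m − α)·C(l,2) pairs from B. (Construction: G is a disjoint union of k cliques of n/k vertices each, and B is the edge set of mk vertex-disjoint cliques of n/(mk) vertices each, m of them inside each clique of G, for n a multiple of mk with n > lk.) -/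
/-!
Take `n = t·mk` vertices, let `G` join distinct vertices with the same residue mod `k` and let `B`
consist of the pairs with the same residue mod `mk`. Then `G` is a disjoint union of `k` cliques,
so an independent set has at most `k < l` vertices, and each clique of `G` is split by `B` into `m`
cliques. An `l`-clique of `G` lies in one clique of `G`, hence meets only `m` classes of `B`, and
Cauchy–Schwarz puts at least `(l²/m - l)/2` of its pairs in `B`; the loss `l(1 - 1/m)/2` compared
with `C(l,2)/m` is absorbed by `α·C(l,2)` as soon as `α(l - 1) ≥ 1`.
-/

open Finset

namespace SimpleGraph

variable {V α : Type*}

/-- The disjoint union of the cliques on the fibres of `f`. -/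
def fiberGraph (f : V → α) : SimpleGraph V := ((⊤ : SimpleGraph α).comap f)ᶜ

theorem cliqueFree_compl_fiberGraph [Fintype α] (f : V → α) {l : ℕ} (hl : Fintype.card α < l) :
    (fiberGraph f)ᶜ.CliqueFree l := by
  rw [fiberGraph, compl_compl]
  exact (Coloring.mk f fun h => h).colorable.cliqueFree hl

theorem IsClique.apply_eq_of_fiberGraph {f : V → α} {s : Set V} (hs : (fiberGraph f).IsClique s)
    {v w : V} (hv : v ∈ s) (hw : w ∈ s) : f v = f w := by
  by_cases hvw : v = w
  · rw [hvw]
  · simpa [fiberGraph] using (hs hv hw hvw).2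

end SimpleGraph

theorem Fin.card_filter_modNat_eq {m n : ℕ} (c : Fin n) :
    #{i : Fin (m * n) | i.modNat = c} = m := by
  rw [card_equiv finProdFinEquiv.symm (t := univ ×ˢ {c})]
  · simp
  · intro i
    simp [eq_comm]

theorem Finset.sq_sum_div_card_sub_sum_div_two_le_sum_choose_two {ι : Type*} (T : Finset ι)
    (f : ι → ℕ) :
    ((∑ i ∈ T, (f i : ℝ)) ^ 2 / #T - ∑ i ∈ T, (f i : ℝ)) / 2 ≤ ∑ i ∈ T, ((f i).choose 2 : ℝ) := by
  have cauchy_schwarz : (∑ i ∈ T, (f i : ℝ)) ^ 2 / #T ≤ ∑ i ∈ T, (f i : ℝ) ^ 2 := by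
    simpa using sq_sum_div_le_sum_sq_div T (fun i => (f i : ℝ)) (g := fun _ => 1) (by simp)
  have sum_mul_pred :
      ∑ i ∈ T, (f i : ℝ) * (f i - 1) = ∑ i ∈ T, (f i : ℝ) ^ 2 - ∑ i ∈ T, (f i : ℝ) := by
    rw [← sum_sub_distrib]
    exact sum_congr rfl fun i _ => by ring
  simp only [Nat.cast_choose_two, ← sum_div]
  rw [sum_mul_pred]
  linarith

section SameFiberPairs

variable {V β : Type*} [LinearOrder V] [DecidableEq β]

def sameFiberPairs (g : V → β) (s : Finset V) : Finset (V × V) :=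
  {e ∈ s ×ˢ s | e.1 < e.2 ∧ g e.1 = g e.2}

theorem filter_sameFiberPairs_univ [Fintype V] (g : V → β) (s : Finset V) :
    (sameFiberPairs g univ).filter (fun e => e.1 ∈ s ∧ e.2 ∈ s) = sameFiberPairs g s := by
  ext e
  simp only [sameFiberPairs, mem_filter, mem_product, mem_univ, true_and]
  tauto

theorem card_sameFiberPairs (g : V → β) {s : Finset V} {T : Finset β}
    (hT : ∀ v ∈ s, g v ∈ T) :
    #(sameFiberPairs g s) = ∑ c ∈ T, (#{v ∈ s | g v = c}).choose 2 := by
  rw [card_eq_sum_card_fiberwise (f := fun e => g e.1) (t := T)]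
  · refine sum_congr rfl fun c _ => ?_
    rw [← card_product_filter_lt]
    congr 1
    ext e
    simp only [sameFiberPairs, mem_filter, mem_product]
    grind
  · intro e he
    exact hT _ (mem_product.1 (mem_filter.1 he).1).1

theorem le_card_sameFiberPairs (g : V → β) {s : Finset V} {T : Finset β}
    (hT : ∀ v ∈ s, g v ∈ T) :
    ((#s : ℝ) ^ 2 / #T - #s) / 2 ≤ #(sameFiberPairs g s) := by
  have hsum : ∑ c ∈ T, #{v ∈ s | g v = c} = #s := (card_eq_sum_card_fiberwise hT).symm
  rw [card_sameFiberPairs g hT, ← hsum]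
  push_cast
  exact sq_sum_div_card_sub_sum_div_two_le_sum_choose_two T _

end SameFiberPairs

theorem mul_choose_two_le_one_div_mul_choose_two (q t : ℕ) :
    (q * t.choose 2 : ℝ) ≤ 1 / q * ((t * q).choose 2 : ℕ) := by
  rcases Nat.eq_zero_or_pos q with rfl | hq
  · simp
  have hq' : (1 : ℝ) ≤ q := by exact_mod_cast hq
  rw [Nat.cast_choose_two, Nat.cast_choose_two, one_div_mul_eq_div, le_div_iff₀ (by positivity)]
  push_cast
  nlinarith [mul_nonneg (mul_nonneg (Nat.cast_nonneg (α := ℝ) t) (by positivity : (0 : ℝ) ≤ q))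
    (sub_nonneg.2 hq')]

theorem one_div_sub_mul_choose_two_le {a : ℝ} {l : ℕ} (m : ℕ) (hl : 1 ≤ a * (l - 1)) :
    (1 / m - a) * l.choose 2 ≤ ((l : ℝ) ^ 2 / m - l) / 2 := by
  have hu : (0 : ℝ) ≤ 1 / m := by positivity
  have hl' := mul_le_mul_of_nonneg_left hl (Nat.cast_nonneg (α := ℝ) l)
  rw [Nat.cast_choose_two, div_eq_mul_one_div ((l : ℝ) ^ 2)]
  nlinarith [mul_nonneg hu (Nat.cast_nonneg (α := ℝ) l)]

open SimpleGraph in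
/-- no quantitative Ramsey in the non-partite setting. For any `α > 0`, `m`, `k`
and all sufficiently large `l`, there are infinitely many `n` admitting a graph `G` on `n`
vertices and a set `B` of at most `(1/(mk))·C(n,2)` undesirable pairs (each recorded as an
ordered pair with increasing endpoints) such that `G` has no independent set of size `l`
and every clique on `l` vertices contains at least `(1/m − α)·C(l,2)` pairs of `B`. -/
theorem no_quantitative_ramsey (a : ℝ) (ha : 0 < a) (m k : ℕ) (hm : 0 < m) (hk : 0 < k) :
    ∃ l₀ : ℕ, ∀ l : ℕ, l₀ ≤ l → ∀ N : ℕ, ∃ n : ℕ, N ≤ n ∧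
      ∃ (G : SimpleGraph (Fin n)) (B : Finset (Fin n × Fin n)),
        (∀ e ∈ B, e.1 < e.2) ∧
        (B.card : ℝ) ≤ (1 / (m * k : ℝ)) * (n.choose 2) ∧
        (Gᶜ).CliqueFree l ∧
        (∀ s : Finset (Fin n), G.IsNClique l s →
          ((1 / (m : ℝ)) - a) * (l.choose 2)
            ≤ ((B.filter (fun e => e.1 ∈ s ∧ e.2 ∈ s)).card : ℝ)) := by
  refine ⟨max (k + 1) (⌈1 / a⌉₊ + 1), fun l hl N => ?_⟩
  rw [max_le_iff] at hl
  have hal : 1 ≤ a * ((l : ℝ) - 1) := by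
    have hceil : ((⌈1 / a⌉₊ + 1 : ℕ) : ℝ) ≤ l := by exact_mod_cast hl.2
    push_cast at hceil
    rw [← div_le_iff₀' ha]
    linarith [Nat.le_ceil (1 / a)]
  refine ⟨(N + 1) * (m * k), (Nat.le_mul_of_pos_right _ (Nat.mul_pos hm hk)).trans' (by omega),
    fiberGraph (fun v : Fin ((N + 1) * (m * k)) => v.modNat.modNat), sameFiberPairs Fin.modNat univ,
    fun e he => (mem_filter.1 he).2.1, ?_, cliqueFree_compl_fiberGraph _ (by simpa using hl.1), ?_⟩
  · rw [card_sameFiberPairs Fin.modNat (T := univ) (fun _ _ => mem_univ _)]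
    simp only [Fin.card_filter_modNat_eq, sum_const, card_univ, Fintype.card_fin, smul_eq_mul]
    exact_mod_cast mul_choose_two_le_one_div_mul_choose_two (m * k) (N + 1)
  · intro s hs
    obtain ⟨v, hv⟩ := card_pos.1 (hs.card_eq.trans_gt (by omega))
    have hT : ∀ w ∈ s, w.modNat ∈ ({c : Fin (m * k) | c.modNat = v.modNat.modNat} : Finset _) :=
      fun w hw => mem_filter.2 ⟨mem_univ _, hs.isClique.apply_eq_of_fiberGraph hw hv⟩
    have hpairs := le_card_sameFiberPairs Fin.modNat hT
    rw [Fin.card_filter_modNat_eq, hs.card_eq] at hpairs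
    rw [filter_sameFiberPairs_univ]
    exact (one_div_sub_mul_choose_two_le m hal).trans hpairs
end

section
/- For any two partitions C and C' of the edge-colored complete graph G, where C' refines C, the index satisfies 0 ≤ ind(C) ≤ ind(C') ≤ 1. -/
open Finset

/-- Density of color `σ` between disjoint vertex sets `A` and `B` in the `Σ`-colored
complete graph with coloring `c`. -/
noncomputable def dens {V C : Type*} [DecidableEq V] [DecidableEq C]
    (c : V → V → C) (σ : C) (A B : Finset V) : ℝ :=
  (((A ×ˢ B).filter (fun p => c p.1 p.2 = σ)).card : ℝ) / ((A.card : ℝ) * (B.card : ℝ))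

/-- Index of a pair of disjoint vertex sets: sum of squared color densities. -/
noncomputable def indPair {V C : Type*} [DecidableEq V] [Fintype C] [DecidableEq C]
    (c : V → V → C) (A B : Finset V) : ℝ :=
  ∑ σ : C, (dens c σ A B) ^ 2

/-- Index of a partition `P = (V_1,…,V_k)`:
`∑_{i<j} (|V_i||V_j| / C(|V|,2)) · ind(V_i,V_j)`. -/
noncomputable def indPart {V C : Type*} [Fintype V] [DecidableEq V] [Fintype C] [DecidableEq C]
    (c : V → V → C) {k : ℕ} (P : Fin k → Finset V) : ℝ :=
  ∑ p ∈ univ.filter (fun p : Fin k × Fin k => p.1 < p.2),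
    (((P p.1).card : ℝ) * ((P p.2).card : ℝ) / ((Fintype.card V).choose 2 : ℝ))
      * indPair c (P p.1) (P p.2)

/-- `P` is a partition of the vertex set. -/
def IsPartition {V : Type*} [Fintype V] [DecidableEq V] {k : ℕ} (P : Fin k → Finset V) : Prop :=
  (∀ i j, i ≠ j → Disjoint (P i) (P j)) ∧ (∀ v : V, ∃ i, v ∈ P i)

/-- `P'` refines `P`: every part of `P'` is contained in some part of `P`. -/
def Refines {V : Type*} {k k' : ℕ} (P' : Fin k' → Finset V) (P : Fin k → Finset V) : Prop :=
  ∀ j, ∃ i, P' j ⊆ P i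

/-!
Put `W(A, B) = |A||B| · ind(A, B) = ∑_σ e_σ(A, B)² / (|A||B|)`, where `e_σ(A, B)` counts the
pairs of colour `σ`. When `A` and `B` are split into pieces, both the counts `e_σ` and the weights
`|A||B|` add up over the pairs of pieces, so Sedrakyan's inequality `(∑ x)² / ∑ w ≤ ∑ x² / w` gives
`W(A, B) ≤ ∑ W(pieces)`. Summing over pairs of parts yields monotonicity under refinement; since a
refinement need not respect the order of the parts, the sums over `i < j` are compared through the
sums over `i ≠ j`, which is where the symmetry of `c` enters. The bound by `1` comes from
`W(A, B) ≤ |A||B|` and `∑_{i<j} |V_i||V_j| ≤ C(|V|, 2)`.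
-/

section ColorCounts

variable {V C : Type*} [DecidableEq C] (c : V → V → C)

def colorCount (σ : C) (A B : Finset V) : ℕ :=
  ((A ×ˢ B).filter (fun p => c p.1 p.2 = σ)).card

lemma colorCount_le_card_mul_card (σ : C) (A B : Finset V) :
    colorCount c σ A B ≤ A.card * B.card :=
  (card_filter_le _ _).trans_eq (card_product A B)

lemma sum_colorCount [Fintype C] (A B : Finset V) :
    ∑ σ, colorCount c σ A B = A.card * B.card := by
  rw [← card_product, card_eq_sum_card_fiberwise fun p _ => mem_univ (c p.1 p.2)]
  rfl

lemma colorCount_comm (hc : ∀ u v, c u v = c v u) (σ : C) (A B : Finset V) :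
    colorCount c σ A B = colorCount c σ B A := by
  refine card_nbij' Prod.swap Prod.swap ?_ ?_ (fun _ _ => rfl) (fun _ _ => rfl) <;>
    · rintro ⟨u, v⟩
      simp [hc u v, and_comm]

lemma colorCount_biUnion [DecidableEq V] {ι κ : Type*} (σ : C) (s : Finset ι) (t : Finset κ)
    (A : ι → Finset V) (B : κ → Finset V)
    (hA : (s : Set ι).PairwiseDisjoint A) (hB : (t : Set κ).PairwiseDisjoint B) :
    colorCount c σ (s.biUnion A) (t.biUnion B) = ∑ q ∈ s ×ˢ t, colorCount c σ (A q.1) (B q.2) := by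
  simp only [colorCount, card_filter, sum_product, sum_biUnion hA, sum_biUnion hB]
  exact sum_congr rfl fun _ _ => sum_comm

lemma dens_eq_colorCount_div [DecidableEq V] (σ : C) (A B : Finset V) :
    dens c σ A B = colorCount c σ A B / ((A.card : ℝ) * B.card) := rfl

end ColorCounts

lemma sq_sum_div_le_sum_sq_div_of_nonneg {ι R : Type*} [Field R] [LinearOrder R]
    [IsStrictOrderedRing R] (s : Finset ι) (f g : ι → R) (hg : ∀ i ∈ s, 0 ≤ g i)
    (hfg : ∀ i ∈ s, g i = 0 → f i = 0) :
    (∑ i ∈ s, f i) ^ 2 / ∑ i ∈ s, g i ≤ ∑ i ∈ s, f i ^ 2 / g i := by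
  have hpos : ∀ i ∈ s, g i ≠ 0 → 0 < g i := fun i hi h => (hg i hi).lt_of_ne' h
  rw [← sum_filter_of_ne fun i hi h => hpos i hi fun h0 => h (hfg i hi h0),
    ← sum_filter_of_ne fun i hi h => hpos i hi h,
    ← sum_filter_of_ne fun i hi h => hpos i hi fun h0 => h (by simp [h0])]
  exact sq_sum_div_le_sum_sq_div _ f fun i hi => (mem_filter.1 hi).2

section WeightedIndex

variable {V C : Type*} [DecidableEq V] [Fintype C] [DecidableEq C] (c : V → V → C)

noncomputable def weightedIndPair (A B : Finset V) : ℝ :=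
  (A.card : ℝ) * B.card * indPair c A B

lemma weightedIndPair_eq (A B : Finset V) :
    weightedIndPair c A B = ∑ σ, (colorCount c σ A B : ℝ) ^ 2 / ((A.card : ℝ) * B.card) := by
  rw [weightedIndPair, indPair, mul_sum]
  refine sum_congr rfl fun σ _ => ?_
  rcases eq_or_ne ((A.card : ℝ) * B.card) 0 with h | h
  · simp [h]
  · rw [dens_eq_colorCount_div]
    field_simp

lemma weightedIndPair_nonneg (A B : Finset V) : 0 ≤ weightedIndPair c A B := by
  rw [weightedIndPair_eq]
  positivity

lemma weightedIndPair_le_card_mul_card (A B : Finset V) :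
    weightedIndPair c A B ≤ A.card * B.card := by
  have hle : ∀ σ, (colorCount c σ A B : ℝ) ≤ A.card * B.card := fun σ => by
    exact_mod_cast colorCount_le_card_mul_card c σ A B
  calc weightedIndPair c A B
      ≤ ∑ σ, (colorCount c σ A B : ℝ) := by
        rw [weightedIndPair_eq]
        refine sum_le_sum fun σ _ => div_le_of_le_mul₀ (by positivity) (by positivity) ?_
        rw [sq]
        exact mul_le_mul_of_nonneg_left (hle σ) (Nat.cast_nonneg _)
    _ = A.card * B.card := by exact_mod_cast sum_colorCount c A B

lemma weightedIndPair_comm (hc : ∀ u v, c u v = c v u) (A B : Finset V) :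
    weightedIndPair c A B = weightedIndPair c B A := by
  simp only [weightedIndPair_eq, colorCount_comm c hc _ A B, mul_comm (A.card : ℝ)]

lemma weightedIndPair_biUnion_le {ι κ : Type*} (s : Finset ι) (t : Finset κ)
    (A : ι → Finset V) (B : κ → Finset V)
    (hA : (s : Set ι).PairwiseDisjoint A) (hB : (t : Set κ).PairwiseDisjoint B) :
    weightedIndPair c (s.biUnion A) (t.biUnion B)
      ≤ ∑ i ∈ s, ∑ j ∈ t, weightedIndPair c (A i) (B j) := by
  have hcard : ((s.biUnion A).card : ℝ) * (t.biUnion B).card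
      = ∑ q ∈ s ×ˢ t, ((A q.1).card : ℝ) * (B q.2).card := by
    rw [card_biUnion hA, card_biUnion hB, sum_product]
    push_cast
    exact sum_mul_sum _ _ _ _
  rw [← sum_product (f := fun q => weightedIndPair c (A q.1) (B q.2))]
  simp only [weightedIndPair_eq]
  rw [sum_comm]
  refine sum_le_sum fun σ _ => ?_
  rw [colorCount_biUnion c σ s t A B hA hB, hcard]
  push_cast
  refine sq_sum_div_le_sum_sq_div_of_nonneg _ _ _ (fun q _ => by positivity) fun q _ h => ?_
  exact_mod_cast Nat.le_zero.1
    ((colorCount_le_card_mul_card c σ (A q.1) (B q.2)).trans_eq (by exact_mod_cast h))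

end WeightedIndex

lemma two_mul_sum_filter_lt {ι R : Type*} [Fintype ι] [LinearOrder ι] [NonAssocSemiring R]
    (T : ι → ι → R) (hT : ∀ i j, T i j = T j i) :
    2 * ∑ p ∈ univ.filter (fun p : ι × ι => p.1 < p.2), T p.1 p.2
      = ∑ i, ∑ j, if i = j then 0 else T i j := by
  have hswap : ∑ i, ∑ j, (if i < j then T i j else 0) = ∑ i, ∑ j, if j < i then T i j else 0 := by
    rw [sum_comm]
    simp only [hT]
  rw [sum_filter, Fintype.sum_prod_type, two_mul]
  nth_rw 2 [hswap]
  rw [← sum_add_distrib]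
  refine sum_congr rfl fun i _ => ?_
  rw [← sum_add_distrib]
  refine sum_congr rfl fun j _ => ?_
  rcases lt_trichotomy i j with h | rfl | h
  · simp [h, h.ne, h.not_gt]
  · simp
  · simp [h, h.ne', h.not_gt]

lemma sum_filter_lt_mul_le_choose_two {ι : Type*} [Fintype ι] [LinearOrder ι] (a : ι → ℕ) :
    ∑ p ∈ univ.filter (fun p : ι × ι => p.1 < p.2), (a p.1 : ℝ) * a p.2
      ≤ ((∑ i, a i).choose 2 : ℕ) := by
  set n := ∑ i, a i
  have hrow : ∀ i, ∑ j, (if i = j then 0 else (a i : ℝ) * a j) = a i * (n - a i) := fun i => by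
    have hsplit : ∀ j, (if i = j then 0 else (a i : ℝ) * a j)
        = a i * a j - if i = j then (a i : ℝ) * a j else 0 := fun j => by
      split_ifs <;> simp_all
    rw [sum_congr rfl fun j _ => hsplit j, sum_sub_distrib, sum_ite_eq, if_pos (mem_univ i),
      ← mul_sum]
    push_cast [n]
    ring
  have hterm : ∀ i, (a i : ℝ) * (n - a i) ≤ a i * (n - 1) := fun i => by
    rcases Nat.eq_zero_or_pos (a i) with h | h
    · simp [h]
    · have : (1 : ℝ) ≤ a i := by exact_mod_cast h
      nlinarith
  have htwo : (2 : ℝ) * ∑ p ∈ univ.filter (fun p : ι × ι => p.1 < p.2), (a p.1 : ℝ) * a p.2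
      ≤ 2 * ((n.choose 2 : ℕ) : ℝ) := by
    rw [two_mul_sum_filter_lt (fun i j => (a i : ℝ) * a j) fun i j => mul_comm _ _,
      Nat.cast_choose_two]
    calc ∑ i, ∑ j, (if i = j then 0 else (a i : ℝ) * a j)
        = ∑ i, (a i : ℝ) * (n - a i) := sum_congr rfl fun i _ => hrow i
      _ ≤ ∑ i, (a i : ℝ) * (n - 1) := sum_le_sum fun i _ => hterm i
      _ = 2 * ((n : ℝ) * (n - 1) / 2) := by rw [← sum_mul]; push_cast [n]; ring
  linarith

lemma sum_sum_ite_fiberwise {ι κ M : Type*} [Fintype ι] [Fintype κ] [DecidableEq κ]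
    [AddCommMonoid M] (f : ι → κ) (g : ι → ι → M) :
    ∑ i, ∑ i', (if i = i' then 0 else
        ∑ j ∈ univ.filter (f · = i), ∑ j' ∈ univ.filter (f · = i'), g j j')
      = ∑ j, ∑ j', if f j = f j' then 0 else g j j' := by
  have hpush : ∀ i i', (if i = i' then 0 else
        ∑ j ∈ univ.filter (f · = i), ∑ j' ∈ univ.filter (f · = i'), g j j')
      = ∑ j ∈ univ.filter (f · = i), ∑ j' ∈ univ.filter (f · = i'),
          if f j = f j' then 0 else g j j' := fun i i' => by
    split_ifs with h
    · subst h
      exact (sum_eq_zero fun j hj => sum_eq_zero fun j' hj' =>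
        if_pos ((mem_filter.1 hj).2.trans (mem_filter.1 hj').2.symm)).symm
    · refine sum_congr rfl fun j hj => sum_congr rfl fun j' hj' => (if_neg ?_).symm
      rwa [(mem_filter.1 hj).2, (mem_filter.1 hj').2]
  simp only [hpush]
  calc _ = ∑ i, ∑ j ∈ univ.filter (f · = i), ∑ i', ∑ j' ∈ univ.filter (f · = i'),
        if f j = f j' then (0 : M) else g j j' := sum_congr rfl fun i _ => sum_comm
    _ = _ := by simp only [sum_fiberwise]

namespace IsPartition

variable {V : Type*} [Fintype V] [DecidableEq V] {k k' : ℕ} {P : Fin k → Finset V}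

lemma sum_card (hP : IsPartition P) : ∑ i, (P i).card = Fintype.card V := by
  rw [← card_biUnion fun i _ j _ h => hP.1 i j h, ← card_univ]
  congr
  ext v
  simpa using hP.2 v

lemma eq_biUnion_fiber (hP : IsPartition P) {P' : Fin k' → Finset V} (hP' : IsPartition P')
    {f : Fin k' → Fin k} (hf : ∀ j, P' j ⊆ P (f j)) (i : Fin k) :
    P i = (univ.filter (f · = i)).biUnion P' := by
  ext v
  simp only [mem_biUnion, mem_filter, mem_univ, true_and]
  constructor
  · intro hv
    obtain ⟨j, hj⟩ := hP'.2 v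
    refine ⟨j, ?_, hj⟩
    by_contra hne
    exact disjoint_left.1 (hP.1 i (f j) (Ne.symm hne)) hv (hf j hj)
  · rintro ⟨j, rfl, hj⟩
    exact hf j hj

end IsPartition

section IndexOfPartition

variable {V C : Type*} [Fintype V] [DecidableEq V] [Fintype C] [DecidableEq C]
  (c : V → V → C) {k k' : ℕ}

lemma indPart_eq_sum_weightedIndPair (P : Fin k → Finset V) :
    indPart c P = (∑ p ∈ univ.filter (fun p : Fin k × Fin k => p.1 < p.2),
      weightedIndPair c (P p.1) (P p.2)) / (Fintype.card V).choose 2 := by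
  rw [indPart, sum_div]
  exact sum_congr rfl fun p _ => div_mul_eq_mul_div _ _ _

lemma indPart_nonneg (P : Fin k → Finset V) : 0 ≤ indPart c P := by
  rw [indPart_eq_sum_weightedIndPair]
  exact div_nonneg (sum_nonneg fun p _ => weightedIndPair_nonneg c _ _) (Nat.cast_nonneg _)

lemma indPart_le_one {P : Fin k → Finset V} (hP : IsPartition P) : indPart c P ≤ 1 := by
  rw [indPart_eq_sum_weightedIndPair]
  refine div_le_one_of_le₀ ?_ (Nat.cast_nonneg _)
  calc ∑ p ∈ univ.filter (fun p : Fin k × Fin k => p.1 < p.2), weightedIndPair c (P p.1) (P p.2)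
      ≤ ∑ p ∈ univ.filter (fun p : Fin k × Fin k => p.1 < p.2),
          ((P p.1).card : ℝ) * (P p.2).card :=
        sum_le_sum fun p _ => weightedIndPair_le_card_mul_card c _ _
    _ ≤ ((∑ i, (P i).card).choose 2 : ℕ) := sum_filter_lt_mul_le_choose_two fun i => (P i).card
    _ = (Fintype.card V).choose 2 := by rw [hP.sum_card]

lemma sum_ite_weightedIndPair_le_of_refines {P : Fin k → Finset V} {P' : Fin k' → Finset V}
    (hP : IsPartition P) (hP' : IsPartition P') {f : Fin k' → Fin k}
    (hf : ∀ j, P' j ⊆ P (f j)) :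
    ∑ i, ∑ i', (if i = i' then 0 else weightedIndPair c (P i) (P i'))
      ≤ ∑ j, ∑ j', if j = j' then 0 else weightedIndPair c (P' j) (P' j') := by
  have hdisj : ∀ s : Finset (Fin k'), (s : Set (Fin k')).PairwiseDisjoint P' :=
    fun _ j _ j' _ h => hP'.1 j j' h
  calc ∑ i, ∑ i', (if i = i' then 0 else weightedIndPair c (P i) (P i'))
      ≤ ∑ i, ∑ i', (if i = i' then 0 else ∑ j ∈ univ.filter (f · = i),
          ∑ j' ∈ univ.filter (f · = i'), weightedIndPair c (P' j) (P' j')) := by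
        refine sum_le_sum fun i _ => sum_le_sum fun i' _ => ?_
        split_ifs
        · rfl
        · rw [hP.eq_biUnion_fiber hP' hf i, hP.eq_biUnion_fiber hP' hf i']
          exact weightedIndPair_biUnion_le c _ _ _ _ (hdisj _) (hdisj _)
    _ = ∑ j, ∑ j', if f j = f j' then 0 else weightedIndPair c (P' j) (P' j') :=
        sum_sum_ite_fiberwise f _
    _ ≤ ∑ j, ∑ j', if j = j' then 0 else weightedIndPair c (P' j) (P' j') := by
        refine sum_le_sum fun j _ => sum_le_sum fun j' _ => ?_
        by_cases h : f j = f j'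
        · rw [if_pos h]
          split_ifs
          exacts [le_rfl, weightedIndPair_nonneg c _ _]
        · rw [if_neg h, if_neg (ne_of_apply_ne f h)]

lemma indPart_le_indPart_of_refines (hc : ∀ u v, c u v = c v u)
    {P : Fin k → Finset V} {P' : Fin k' → Finset V}
    (hP : IsPartition P) (hP' : IsPartition P') (href : Refines P' P) :
    indPart c P ≤ indPart c P' := by
  choose f hf using href
  rw [indPart_eq_sum_weightedIndPair, indPart_eq_sum_weightedIndPair]
  gcongr ?_ / _
  refine le_of_mul_le_mul_left ?_ two_pos
  rw [two_mul_sum_filter_lt _ fun i j => weightedIndPair_comm c hc (P i) (P j),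
    two_mul_sum_filter_lt _ fun i j => weightedIndPair_comm c hc (P' i) (P' j)]
  exact sum_ite_weightedIndPair_le_of_refines c hP hP' hf

end IndexOfPartition

/-- for partitions `C` and `C'` of a colored complete graph with `C'`
refining `C`, the indexes satisfy `0 ≤ ind(C) ≤ ind(C') ≤ 1`. -/
theorem index_monotone_refinement {V C : Type*} [Fintype V] [DecidableEq V]
    [Fintype C] [DecidableEq C] (c : V → V → C) (hc : ∀ u v, c u v = c v u)
    {k k' : ℕ} (P : Fin k → Finset V) (P' : Fin k' → Finset V)
    (hP : IsPartition P) (hP' : IsPartition P') (href : Refines P' P) :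
    0 ≤ indPart c P ∧ indPart c P ≤ indPart c P' ∧ indPart c P' ≤ 1 :=
  ⟨indPart_nonneg c P, indPart_le_indPart_of_refines c hc hP hP' href, indPart_le_one c hP'⟩
end

section
/- For any integer k > 0, function f: ℕ → ℕ, and real γ > 0, there exists T = T(k, f, γ) such that any interval equipartition I of a string S with |I| = k has an (f, γ)-robust interval equipartition refinement I' consisting of at most T intervals. -/
/-!
The index of an interval partition lies in `[0, 1]`. If an equipartition is not `(f, γ)`-robust,
it has a refining equipartition of size at most `f` of its size whose index is larger by more than
`γ`; this can happen at most `⌈1/γ⌉` times in a row. Bounding sizes by iterates of a monotone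
majorant of `f` and the identity gives a bound that depends only on `k`, `f` and `γ`.
-/

open Finset

/-- Density of symbol `σ` in the substring indexed by `J`. -/
noncomputable def densStr {n : ℕ} {C : Type*} [DecidableEq C]
    (S : Fin n → C) (σ : C) (J : Finset (Fin n)) : ℝ :=
  ((J.filter (fun v => S v = σ)).card : ℝ) / (J.card : ℝ)

/-- Index of a substring: sum of squared symbol densities. -/
noncomputable def indStr {n : ℕ} {C : Type*} [Fintype C] [DecidableEq C]
    (S : Fin n → C) (J : Finset (Fin n)) : ℝ :=
  ∑ σ : C, (densStr S σ J) ^ 2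

/-- Index of an interval partition `I = (I_1,…,I_k)` of the string `S`. -/
noncomputable def indIntPart {n : ℕ} {C : Type*} [Fintype C] [DecidableEq C]
    (S : Fin n → C) {k : ℕ} (I : Fin k → Finset (Fin n)) : ℝ :=
  ∑ i : Fin k, ((I i).card : ℝ) / (n : ℝ) * indStr S (I i)

/-- `I` is an interval partition of `Fin n`: the parts are pairwise disjoint, cover
everything, and are consecutive intervals appearing in order of their index. -/
def IsIntervalPartition {n k : ℕ} (I : Fin k → Finset (Fin n)) : Prop :=
  (∀ i j, i ≠ j → Disjoint (I i) (I j)) ∧ (∀ v : Fin n, ∃ i, v ∈ I i) ∧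
    (∀ i j : Fin k, i < j → ∀ x ∈ I i, ∀ y ∈ I j, x < y)

/-- Equitable: all parts have sizes differing by at most 1. -/
def IsEquitable {n k : ℕ} (I : Fin k → Finset (Fin n)) : Prop :=
  ∀ i j, (I i).card ≤ (I j).card + 1

/-- `I'` refines `I`: every interval of `I'` is contained in an interval of `I`. -/
def IntRefines {n k k' : ℕ} (I' : Fin k' → Finset (Fin n)) (I : Fin k → Finset (Fin n)) : Prop :=
  ∀ j, ∃ i, I' j ⊆ I i

/-- An interval equipartition `I` of size `k` is `(f,γ)`-robust if every refining interval
equipartition of size at most `f(k)` has index at most `ind(I) + γ`. -/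
def IsIntRobust {n : ℕ} {C : Type*} [Fintype C] [DecidableEq C] (S : Fin n → C)
    (f : ℕ → ℕ) (γ : ℝ) {k : ℕ} (I : Fin k → Finset (Fin n)) : Prop :=
  ∀ (k' : ℕ) (I' : Fin k' → Finset (Fin n)),
    IsIntervalPartition I' → IsEquitable I' → IntRefines I' I → k' ≤ f k →
    indIntPart S I' ≤ indIntPart S I + γ

lemma sum_card_le_of_pairwise_disjoint {n k : ℕ} {I : Fin k → Finset (Fin n)}
    (hd : ∀ i j, i ≠ j → Disjoint (I i) (I j)) : ∑ i, (I i).card ≤ n := by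
  rw [← card_biUnion fun i _ j _ hij => hd i j hij]
  simpa using card_le_univ (univ.biUnion I)

section Index

variable {n : ℕ} {C : Type*} [DecidableEq C] (S : Fin n → C)

lemma densStr_nonneg (σ : C) (J : Finset (Fin n)) : 0 ≤ densStr S σ J := by
  unfold densStr
  positivity

lemma densStr_le_one (σ : C) (J : Finset (Fin n)) : densStr S σ J ≤ 1 :=
  div_le_one_of_le₀ (by exact_mod_cast card_filter_le _ _) (by positivity)

lemma sum_densStr_le_one [Fintype C] (J : Finset (Fin n)) : ∑ σ : C, densStr S σ J ≤ 1 := by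
  unfold densStr
  rw [← sum_div]
  refine div_le_one_of_le₀ ?_ (by positivity)
  exact_mod_cast (card_eq_sum_card_fiberwise fun x _ => mem_univ (S x)).ge

variable [Fintype C]

lemma indStr_nonneg (J : Finset (Fin n)) : 0 ≤ indStr S J :=
  sum_nonneg fun _ _ => sq_nonneg _

lemma indStr_le_one (J : Finset (Fin n)) : indStr S J ≤ 1 := by
  calc indStr S J ≤ ∑ σ : C, densStr S σ J :=
        sum_le_sum fun σ _ => pow_le_of_le_one (densStr_nonneg S σ J) (densStr_le_one S σ J)
          two_ne_zero
    _ ≤ 1 := sum_densStr_le_one S J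

lemma indIntPart_nonneg {k : ℕ} (I : Fin k → Finset (Fin n)) : 0 ≤ indIntPart S I :=
  sum_nonneg fun i _ => mul_nonneg (by positivity) (indStr_nonneg S (I i))

lemma indIntPart_le_one {k : ℕ} {I : Fin k → Finset (Fin n)}
    (hd : ∀ i j, i ≠ j → Disjoint (I i) (I j)) : indIntPart S I ≤ 1 := by
  calc indIntPart S I ≤ ∑ i, ((I i).card : ℝ) / n :=
        sum_le_sum fun i _ => mul_le_of_le_one_right (by positivity) (indStr_le_one S (I i))
    _ ≤ 1 := by
        rw [← sum_div]
        refine div_le_one_of_le₀ ?_ (by positivity)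
        exact_mod_cast sum_card_le_of_pairwise_disjoint hd

end Index

lemma IntRefines.refl {n k : ℕ} (I : Fin k → Finset (Fin n)) : IntRefines I I :=
  fun j => ⟨j, subset_rfl⟩

lemma IntRefines.trans {n k k' k'' : ℕ} {I'' : Fin k'' → Finset (Fin n)}
    {I' : Fin k' → Finset (Fin n)} {I : Fin k → Finset (Fin n)}
    (h₁ : IntRefines I'' I') (h₂ : IntRefines I' I) : IntRefines I'' I := by
  intro j
  obtain ⟨i', hi'⟩ := h₁ j
  obtain ⟨i, hi⟩ := h₂ i'
  exact ⟨i, hi'.trans hi⟩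

section Majorant

def monoMajorant (f : ℕ → ℕ) (m : ℕ) : ℕ := max m ((range (m + 1)).sup f)

variable (f : ℕ → ℕ)

lemma le_monoMajorant (m : ℕ) : m ≤ monoMajorant f m := le_max_left _ _

lemma apply_le_monoMajorant (m : ℕ) : f m ≤ monoMajorant f m :=
  (le_sup (self_mem_range_succ m)).trans (le_max_right _ _)

lemma monotone_monoMajorant : Monotone (monoMajorant f) := fun _ _ hab =>
  max_le_max hab (sup_mono (range_subset_range.mpr (by omega)))

lemma le_iterate_monoMajorant (r m : ℕ) : m ≤ (monoMajorant f)^[r] m :=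
  Function.id_le_iterate_of_id_le (le_monoMajorant f) r m

end Majorant

lemma exists_robust_refinement {n : ℕ} {C : Type*} [Fintype C] [DecidableEq C]
    (S : Fin n → C) (f : ℕ → ℕ) {γ : ℝ} (hγ : 0 ≤ γ) (r : ℕ) {k : ℕ}
    (I : Fin k → Finset (Fin n)) (hp : IsIntervalPartition I) (he : IsEquitable I)
    (hind : 1 ≤ indIntPart S I + r * γ) :
    ∃ (k' : ℕ) (I' : Fin k' → Finset (Fin n)), k' ≤ (monoMajorant f)^[r] k ∧
      IsIntervalPartition I' ∧ IsEquitable I' ∧ IntRefines I' I ∧ IsIntRobust S f γ I' := by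
  induction r generalizing k with
  | zero =>
    refine ⟨k, I, le_rfl, hp, he, IntRefines.refl I, fun _ J hJ _ _ _ => ?_⟩
    simp only [CharP.cast_eq_zero, zero_mul, add_zero] at hind
    linarith [indIntPart_le_one S hJ.1]
  | succ r ih =>
    by_cases hrob : IsIntRobust S f γ I
    · exact ⟨k, I, le_iterate_monoMajorant f _ _, hp, he, IntRefines.refl I, hrob⟩
    simp only [IsIntRobust, not_forall, not_le] at hrob
    obtain ⟨k₁, J, hJp, hJe, hJI, hk₁, hgain⟩ := hrob
    have hindJ : 1 ≤ indIntPart S J + r * γ := by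
      push_cast at hind
      linarith
    obtain ⟨k', I', hk', hp', he', hI'J, hrob'⟩ := ih J hJp hJe hindJ
    refine ⟨k', I', ?_, hp', he', hI'J.trans hJI, hrob'⟩
    calc k' ≤ (monoMajorant f)^[r] k₁ := hk'
      _ ≤ (monoMajorant f)^[r] (monoMajorant f k) :=
          (monotone_monoMajorant f).iterate r (hk₁.trans (apply_le_monoMajorant f k))
      _ = (monoMajorant f)^[r + 1] k := (Function.iterate_succ_apply _ r k).symm

theorem robust_interval_partition_exists_general (k : ℕ) (f : ℕ → ℕ) (γ : ℝ)
    (hγ : 0 < γ) :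
    ∃ T : ℕ, ∀ (n : ℕ) (C : Type) [Fintype C] [DecidableEq C] (S : Fin n → C)
      (I : Fin k → Finset (Fin n)), IsIntervalPartition I → IsEquitable I →
      ∃ (k' : ℕ) (I' : Fin k' → Finset (Fin n)), k' ≤ T ∧
        IsIntervalPartition I' ∧ IsEquitable I' ∧ IntRefines I' I ∧ IsIntRobust S f γ I' := by
  refine ⟨(monoMajorant f)^[⌈γ⁻¹⌉₊] k, fun n C _ _ S I hp he => ?_⟩
  have hsteps : 1 ≤ (⌈γ⁻¹⌉₊ : ℝ) * γ := by
    calc (1 : ℝ) = γ⁻¹ * γ := (inv_mul_cancel₀ hγ.ne').symm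
      _ ≤ ⌈γ⁻¹⌉₊ * γ := mul_le_mul_of_nonneg_right (Nat.le_ceil _) hγ.le
  exact exists_robust_refinement S f hγ.le _ I hp he (by linarith [indIntPart_nonneg S I])

/-- robust partitioning of intervals: for any `k > 0`, `f` and `γ > 0`
there exists `T = T(k,f,γ)` such that any interval equipartition of size `k` of any string
has an `(f,γ)`-robust refining interval equipartition of size at most `T`. -/
theorem robust_interval_partition_exists (k : ℕ) (hk : 0 < k) (f : ℕ → ℕ) (γ : ℝ)
    (hγ : 0 < γ) :
    ∃ T : ℕ, ∀ (n : ℕ) (C : Type) [Fintype C] [DecidableEq C] (S : Fin n → C)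
      (I : Fin k → Finset (Fin n)), IsIntervalPartition I → IsEquitable I →
      ∃ (k' : ℕ) (I' : Fin k' → Finset (Fin n)), k' ≤ T ∧
        IsIntervalPartition I' ∧ IsEquitable I' ∧ IntRefines I' I ∧ IsIntRobust S f γ I' :=
  robust_interval_partition_exists_general k f γ hγ
end
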